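/- arXiv:1603.03950 — 4 statements merged into one kernel-verified Lean document; each statement's English description precedes it below -/
import Mathlib

section
/- Let θ, q ∈ ℝ. Then ∫_ℝ e^{θ v} φ(v) Φ(q v) dv = e^{θ²/2} Φ(θ q / √(q² + 1)), where the integral is with respect to Lebesgue measure on ℝ. -/
open MeasureTheory Filter Set

/-- The standard normal density `φ`. -/
noncomputable def stdNormalPDF (x : ℝ) : ℝ :=
  Real.exp (-x ^ 2 / 2) / Real.sqrt (2 * Real.pi)

/-- The standard normal cumulative distribution function `Φ`. -/
noncomputable def stdNormalCDF (x : ℝ) : ℝ :=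
  ∫ t in Set.Iic x, stdNormalPDF t

/-!
Tilting, `e^{θv} φ(v) = e^{θ²/2} φ(v - θ)`, followed by a translation reduces the integral to
`∫ φ(u) Φ(qu + c) du` with `c = θq`. Write `Φ(qu + c) = ∫_{t ≤ c} φ(qu + t) dt` and exchange the
integrals: completing the square in `u` gives `∫ φ(u) φ(qu + t) du = φ(t/r)/r` with
`r = √(q² + 1)`, and integrating this over `t ≤ c` gives `Φ(c/r)`.
-/

open ProbabilityTheory

lemma stdNormalPDF_eq_gaussianPDFReal : stdNormalPDF = gaussianPDFReal 0 1 := by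
  ext x
  simp [stdNormalPDF, gaussianPDFReal, div_eq_inv_mul]

lemma stdNormalPDF_nonneg (x : ℝ) : 0 ≤ stdNormalPDF x := by
  rw [stdNormalPDF_eq_gaussianPDFReal]; exact gaussianPDFReal_nonneg 0 1 x

lemma integrable_stdNormalPDF : Integrable stdNormalPDF := by
  rw [stdNormalPDF_eq_gaussianPDFReal]; exact integrable_gaussianPDFReal 0 1

lemma integral_stdNormalPDF : ∫ x, stdNormalPDF x = 1 := by
  rw [stdNormalPDF_eq_gaussianPDFReal]; exact integral_gaussianPDFReal_eq_one 0 one_ne_zero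

lemma exp_mul_mul_stdNormalPDF (θ v : ℝ) :
    Real.exp (θ * v) * stdNormalPDF v = Real.exp (θ ^ 2 / 2) * stdNormalPDF (v - θ) := by
  simp only [stdNormalPDF, mul_div_assoc', ← Real.exp_add]
  ring_nf

lemma setIntegral_Iic_stdNormalPDF_add (a c : ℝ) :
    ∫ t in Iic c, stdNormalPDF (a + t) = stdNormalCDF (a + c) := by
  have h := (measurePreserving_add_left volume a).setIntegral_preimage_emb
    (MeasurableEquiv.addLeft a).measurableEmbedding stdNormalPDF (Iic (a + c))
  rwa [preimage_const_add_Iic, add_sub_cancel_left] at h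

lemma setIntegral_Iic_stdNormalPDF_div {r : ℝ} (hr : 0 < r) (c : ℝ) :
    ∫ t in Iic c, stdNormalPDF (t / r) / r = stdNormalCDF (c / r) := by
  simp_rw [div_eq_inv_mul _ r, integral_const_mul, ← smul_eq_mul r⁻¹,
    Measure.setIntegral_comp_smul_of_pos _ _ _ (inv_pos.2 hr),
    LinearOrderedField.smul_Iic (inv_pos.2 hr)]
  simp [stdNormalCDF, hr.ne']

lemma stdNormalPDF_mul_stdNormalPDF_affine {q r : ℝ} (hr : r ^ 2 = q ^ 2 + 1) (hr0 : r ≠ 0)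
    (t u : ℝ) : stdNormalPDF u * stdNormalPDF (q * u + t)
      = stdNormalPDF (r * u + q * t / r) * stdNormalPDF (t / r) := by
  simp only [stdNormalPDF, div_mul_div_comm, ← Real.exp_add]
  congr 2
  field_simp
  linear_combination (u ^ 2 * r ^ 2 - t ^ 2) * hr

lemma integral_stdNormalPDF_mul_left_add {r : ℝ} (hr : 0 < r) (b : ℝ) :
    ∫ u, stdNormalPDF (r * u + b) = r⁻¹ := by
  rw [Measure.integral_comp_mul_left (fun y ↦ stdNormalPDF (y + b)), integral_add_right_eq_self,
    integral_stdNormalPDF, abs_of_pos (inv_pos.2 hr), smul_eq_mul, mul_one]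

lemma integral_stdNormalPDF_mul_stdNormalPDF_affine (q t : ℝ) :
    ∫ u, stdNormalPDF u * stdNormalPDF (q * u + t)
      = stdNormalPDF (t / √(q ^ 2 + 1)) / √(q ^ 2 + 1) := by
  have hr : 0 < √(q ^ 2 + 1) := Real.sqrt_pos.2 (by positivity)
  simp_rw [stdNormalPDF_mul_stdNormalPDF_affine (Real.sq_sqrt (by positivity)) hr.ne',
    integral_mul_const, integral_stdNormalPDF_mul_left_add hr]
  ring

lemma integrable_stdNormalPDF_mul_stdNormalPDF_affine (q : ℝ) :
    Integrable (fun p : ℝ × ℝ ↦ stdNormalPDF p.1 * stdNormalPDF (q * p.1 + p.2))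
      (volume.prod volume) := by
  have hmeas : AEStronglyMeasurable
      (fun p : ℝ × ℝ ↦ stdNormalPDF p.1 * stdNormalPDF (q * p.1 + p.2)) (volume.prod volume) :=
    (by unfold stdNormalPDF; fun_prop : Continuous _).aestronglyMeasurable
  refine (integrable_prod_iff hmeas).2 ⟨ae_of_all _ fun u ↦ ?_, ?_⟩
  · exact (integrable_stdNormalPDF.comp_add_left (q * u)).const_mul (stdNormalPDF u)
  · simp_rw [Real.norm_eq_abs,
      abs_of_nonneg (mul_nonneg (stdNormalPDF_nonneg _) (stdNormalPDF_nonneg _)),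
      integral_const_mul, integral_add_left_eq_self (fun t ↦ stdNormalPDF t),
      integral_stdNormalPDF, mul_one]
    exact integrable_stdNormalPDF

lemma integral_stdNormalPDF_mul_stdNormalCDF_affine (q c : ℝ) :
    ∫ u, stdNormalPDF u * stdNormalCDF (q * u + c) = stdNormalCDF (c / √(q ^ 2 + 1)) := by
  have hr : 0 < √(q ^ 2 + 1) := Real.sqrt_pos.2 (by positivity)
  have hint : Integrable (Function.uncurry fun u t ↦ stdNormalPDF u * stdNormalPDF (q * u + t))
      (volume.prod (volume.restrict (Iic c))) :=
    (integrable_stdNormalPDF_mul_stdNormalPDF_affine q).mono_measure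
      (Measure.prod_mono le_rfl Measure.restrict_le_self)
  calc ∫ u, stdNormalPDF u * stdNormalCDF (q * u + c)
      = ∫ u, ∫ t in Iic c, stdNormalPDF u * stdNormalPDF (q * u + t) := by
        simp_rw [integral_const_mul, setIntegral_Iic_stdNormalPDF_add]
    _ = ∫ t in Iic c, ∫ u, stdNormalPDF u * stdNormalPDF (q * u + t) := integral_integral_swap hint
    _ = stdNormalCDF (c / √(q ^ 2 + 1)) := by
        simp_rw [integral_stdNormalPDF_mul_stdNormalPDF_affine, setIntegral_Iic_stdNormalPDF_div hr]

theorem integral_exp_mul_stdNormalPDF_mul_stdNormalCDF (θ q : ℝ) :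
    ∫ v : ℝ, Real.exp (θ * v) * stdNormalPDF v * stdNormalCDF (q * v) =
      Real.exp (θ ^ 2 / 2) * stdNormalCDF (θ * q / Real.sqrt (q ^ 2 + 1)) := by
  calc ∫ v, Real.exp (θ * v) * stdNormalPDF v * stdNormalCDF (q * v)
      = ∫ v, Real.exp (θ ^ 2 / 2) *
          (stdNormalPDF (v - θ) * stdNormalCDF (q * (v - θ) + θ * q)) := by
        congr 1; ext v
        rw [exp_mul_mul_stdNormalPDF, show q * (v - θ) + θ * q = q * v by ring, mul_assoc]
    _ = Real.exp (θ ^ 2 / 2) * stdNormalCDF (θ * q / Real.sqrt (q ^ 2 + 1)) := by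
        rw [integral_const_mul, integral_sub_right_eq_self
          (fun u ↦ stdNormalPDF u * stdNormalCDF (q * u + θ * q)),
          integral_stdNormalPDF_mul_stdNormalCDF_affine]
end

section
/- Let Z be a standard normal random variable and E₀, E₁ independent random variables with the exponential distribution of rate 1, with (Z, E₀, E₁) mutually independent, let α₀, α > 0 with α₀ ≠ α, and set W = Z + α₀·E₀ + α·E₁ with cdf F_W(z) = P(W ≤ z). Fix x > 0, let α* = max(α₀, α) and c = 0.5/α* + α*·log(α*/|α₀ − α|) − α*·log x. Then n·(1 − F_W(c + α*·log n)) → x as n → ∞. -/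
open MeasureTheory ProbabilityTheory Filter Set

/-- The exponential distribution of rate 1 on `ℝ`: density `e^{-x}` on `[0, ∞)`, `0` elsewhere. -/
noncomputable def expMeasure1 : Measure ℝ :=
  volume.withDensity fun x => ENNReal.ofReal (if 0 ≤ x then Real.exp (-x) else 0)

/-!
Conditioning on `Z` gives `1 - F_W(t) = E[T(t - Z)]`, where `T(s) = P(α₀E₀ + αE₁ > s)` is
explicit: for `s > 0` it equals `(α e^{-s/α} - α₀ e^{-s/α₀}) / (α - α₀)`. Hence
`T(s) ≤ K e^{-s/α*}` for all `s` and `e^{s/α*} T(s) → K := α* / |α₀ - α|`. For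
`t = c + α* log n` this gives `n T(t - z) → K e^{(z - c)/α*}`, dominated by the limit itself,
which is integrable against the Gaussian. Dominated convergence yields the limit
`K e^{-c/α*} E[e^{Z/α*}] = K e^{-c/α* + 1/(2α*²)}`, and `c` is chosen to make this `x`.
-/

open Real Topology

lemma expMeasure1_eq_expMeasure_one : expMeasure1 = expMeasure 1 := by
  have : expMeasure 1 = volume.withDensity (exponentialPDF 1) := rfl
  rw [this, expMeasure1]
  congr 1 with x
  simp [exponentialPDF_eq]

instance : IsProbabilityMeasure expMeasure1 :=
  expMeasure1_eq_expMeasure_one ▸ isProbabilityMeasure_expMeasure one_pos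

lemma expMeasure1_real_Ioi (r : ℝ) : expMeasure1.real (Ioi r) = exp (-max r 0) := by
  rw [← compl_Iic, probReal_compl_eq_one_sub measurableSet_Iic, ← cdf_eq_real,
    expMeasure1_eq_expMeasure_one, cdf_expMeasure_eq one_pos]
  split_ifs with h
  · simp [max_eq_left h]
  · simp [max_eq_right (not_le.1 h).le]

lemma integral_expMeasure1 (f : ℝ → ℝ) :
    ∫ u, f u ∂expMeasure1 = ∫ u in Ioi 0, exp (-u) * f u := by
  have hdens : Measurable fun x : ℝ => ENNReal.ofReal (if 0 ≤ x then exp (-x) else 0) :=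
    (Measurable.ite measurableSet_Ici (by fun_prop) measurable_const).ennreal_ofReal
  rw [expMeasure1, integral_withDensity_eq_integral_toReal_smul hdens
    (ae_of_all _ fun _ => ENNReal.ofReal_lt_top), ← integral_Ici_eq_integral_Ioi,
    ← integral_indicator measurableSet_Ici]
  congr 1 with u
  by_cases hu : 0 ≤ u <;> simp [hu, (exp_pos _).le]

lemma integral_exp_mul {c : ℝ} (hc : c ≠ 0) (a b : ℝ) :
    ∫ u in a..b, exp (c * u) = (exp (c * b) - exp (c * a)) / c := by
  rw [intervalIntegral.integral_comp_mul_left exp hc, integral_exp, smul_eq_mul, inv_mul_eq_div]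

noncomputable def twoExpTail (α₀ α s : ℝ) : ℝ :=
  (expMeasure1.prod expMeasure1).real {q : ℝ × ℝ | s < α₀ * q.1 + α * q.2}

section TwoExpTail

variable {α₀ α : ℝ}

lemma twoExpTail_nonneg (s : ℝ) : 0 ≤ twoExpTail α₀ α s := measureReal_nonneg

lemma twoExpTail_le_one (s : ℝ) : twoExpTail α₀ α s ≤ 1 := measureReal_le_one

lemma measurable_twoExpTail : Measurable (twoExpTail α₀ α) := by
  have hU : MeasurableSet {p : ℝ × ℝ × ℝ | p.1 < α₀ * p.2.1 + α * p.2.2} :=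
    measurableSet_lt (by fun_prop) (by fun_prop)
  exact (measurable_measure_prodMk_left hU).ennreal_toReal

lemma twoExpTail_comm (α₀ α s : ℝ) : twoExpTail α₀ α s = twoExpTail α α₀ s := by
  have hS : MeasurableSet {q : ℝ × ℝ | s < α * q.1 + α₀ * q.2} :=
    measurableSet_lt (by fun_prop) (by fun_prop)
  rw [twoExpTail, twoExpTail]
  conv_rhs => rw [← Measure.prod_swap]
  rw [map_measureReal_apply measurable_swap hS]
  congr 1 with q
  simp [add_comm]

lemma twoExpTail_eq_integral (hα : 0 < α) (s : ℝ) :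
    twoExpTail α₀ α s = ∫ u in Ioi 0, exp (-u) * exp (-max ((s - α₀ * u) / α) 0) := by
  have hS : MeasurableSet {q : ℝ × ℝ | s < α₀ * q.1 + α * q.2} :=
    measurableSet_lt (by fun_prop) (by fun_prop)
  have hslice (u : ℝ) : Prod.mk u ⁻¹' {q : ℝ × ℝ | s < α₀ * q.1 + α * q.2}
      = Ioi ((s - α₀ * u) / α) := by
    ext v
    simp only [mem_preimage, mem_ofPred_eq, mem_Ioi, div_lt_iff₀ hα]
    constructor <;> intro h <;> linarith
  rw [twoExpTail, measureReal_def, Measure.prod_apply hS, ← integral_toReal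
    (measurable_measure_prodMk_left hS).aemeasurable (ae_of_all _ fun _ => measure_lt_top _ _)]
  simp_rw [hslice, ← measureReal_def, expMeasure1_real_Ioi]
  exact integral_expMeasure1 _

lemma integrableOn_exp_neg_mul_exp_neg_max (s : ℝ) :
    IntegrableOn (fun u => exp (-u) * exp (-max ((s - α₀ * u) / α) 0)) (Ioi 0) := by
  refine (integrableOn_exp_neg_Ioi 0).mono' (Continuous.aestronglyMeasurable (by fun_prop))
    (ae_of_all _ fun u => ?_)
  rw [norm_of_nonneg (by positivity)]
  exact mul_le_of_le_one_right (exp_pos _).le (exp_le_one_iff.2 (by simp))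

lemma twoExpTail_eq (hα₀ : 0 < α₀) (hα : 0 < α) (hne : α₀ ≠ α) {s : ℝ} (hs : 0 < s) :
    twoExpTail α₀ α s = (α * exp (-s / α) - α₀ * exp (-s / α₀)) / (α - α₀) := by
  set b := s / α₀ with hb_def
  have hb : 0 < b := div_pos hs hα₀
  have hβ : (α₀ - α) / α ≠ 0 := div_ne_zero (sub_ne_zero.2 hne) hα.ne'
  have hint := integrableOn_exp_neg_mul_exp_neg_max (α₀ := α₀) (α := α) s
  have hbefore : ∫ u in Ioc 0 b, exp (-u) * exp (-max ((s - α₀ * u) / α) 0)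
      = exp (-s / α) * ((exp ((α₀ - α) / α * b) - 1) / ((α₀ - α) / α)) := by
    rw [setIntegral_congr_fun measurableSet_Ioc
        (g := fun u => exp (-s / α) * exp ((α₀ - α) / α * u)), integral_const_mul,
      ← intervalIntegral.integral_of_le hb.le, integral_exp_mul hβ, mul_zero, exp_zero]
    intro u hu
    dsimp only
    have : α₀ * u ≤ s := (le_div_iff₀' hα₀).1 hu.2
    rw [max_eq_left (div_nonneg (by linarith) hα.le), ← exp_add, ← exp_add]
    congr 1
    field_simp
    ring
  have hafter : ∫ u in Ioi b, exp (-u) * exp (-max ((s - α₀ * u) / α) 0) = exp (-s / α₀) := by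
    rw [setIntegral_congr_fun measurableSet_Ioi (g := fun u => exp (-u)), integral_exp_neg_Ioi,
      neg_div]
    intro u hu
    dsimp only
    have : s < α₀ * u := (div_lt_iff₀' hα₀).1 hu
    simp [max_eq_right (div_nonpos_of_nonpos_of_nonneg (by linarith : s - α₀ * u ≤ 0) hα.le)]
  have hexp : exp (-s / α) * exp ((α₀ - α) / α * b) = exp (-s / α₀) := by
    rw [← exp_add, hb_def]
    congr 1
    field_simp
    ring
  rw [twoExpTail_eq_integral hα, ← Ioc_union_Ioi_eq_Ioi hb.le,
    setIntegral_union (Ioc_disjoint_Ioi le_rfl) measurableSet_Ioi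
      (hint.mono_set Ioc_subset_Ioi_self) (hint.mono_set (Ioi_subset_Ioi hb.le)),
    hbefore, hafter, mul_div_assoc', mul_sub, hexp]
  have : α - α₀ ≠ 0 := sub_ne_zero.2 hne.symm
  field_simp
  ring

lemma twoExpTail_le_of_lt (hα₀ : 0 < α₀) (hlt : α₀ < α) (s : ℝ) :
    twoExpTail α₀ α s ≤ α / (α - α₀) * exp (-s / α) := by
  have hα : 0 < α := hα₀.trans hlt
  have hgap : 0 < α - α₀ := sub_pos.2 hlt
  rcases le_or_gt s 0 with hs | hs
  · calc twoExpTail α₀ α s ≤ 1 * 1 := by rw [mul_one]; exact twoExpTail_le_one s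
      _ ≤ α / (α - α₀) * exp (-s / α) := by
        gcongr
        · exact (one_le_div hgap).2 (by linarith)
        · exact one_le_exp (div_nonneg (neg_nonneg.2 hs) hα.le)
  · rw [twoExpTail_eq hα₀ hα hlt.ne hs, div_mul_eq_mul_div]
    gcongr
    exact sub_le_self _ (by positivity)

lemma tendsto_exp_mul_twoExpTail_of_lt (hα₀ : 0 < α₀) (hlt : α₀ < α) :
    Tendsto (fun s => exp (s / α) * twoExpTail α₀ α s) atTop (𝓝 (α / (α - α₀))) := by
  have hα : 0 < α := hα₀.trans hlt
  have hrate : 0 < 1 / α₀ - 1 / α := sub_pos.2 (one_div_lt_one_div_of_lt hα₀ hlt)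
  have hdecay : Tendsto (fun s => exp (-((1 / α₀ - 1 / α) * s))) atTop (𝓝 0) :=
    tendsto_exp_neg_atTop_nhds_zero.comp (tendsto_id.const_mul_atTop hrate)
  have hlim := ((hdecay.const_mul α₀).const_sub α).div_const (α - α₀)
  rw [mul_zero, sub_zero] at hlim
  refine hlim.congr' ((eventually_gt_atTop 0).mono fun s hs => ?_)
  have hcancel : exp (s / α) * exp (-s / α) = 1 := by
    rw [← exp_add, neg_div, add_neg_cancel, exp_zero]
  have hrest : exp (s / α) * exp (-s / α₀) = exp (-((1 / α₀ - 1 / α) * s)) := by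
    rw [← exp_add]
    ring_nf
  dsimp only
  rw [twoExpTail_eq hα₀ hα hlt.ne hs, mul_div_assoc', mul_sub, mul_left_comm _ α,
    mul_left_comm _ α₀, hcancel, hrest, mul_one]

lemma twoExpTail_le (hα₀ : 0 < α₀) (hα : 0 < α) (hne : α₀ ≠ α) (s : ℝ) :
    twoExpTail α₀ α s ≤ max α₀ α / |α₀ - α| * exp (-s / max α₀ α) := by
  rcases hne.lt_or_gt with h | h
  · rw [max_eq_right h.le, abs_sub_comm, abs_of_pos (sub_pos.2 h)]
    exact twoExpTail_le_of_lt hα₀ h s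
  · rw [max_eq_left h.le, abs_of_pos (sub_pos.2 h), twoExpTail_comm]
    exact twoExpTail_le_of_lt hα h s

lemma tendsto_exp_mul_twoExpTail (hα₀ : 0 < α₀) (hα : 0 < α) (hne : α₀ ≠ α) :
    Tendsto (fun s => exp (s / max α₀ α) * twoExpTail α₀ α s) atTop
      (𝓝 (max α₀ α / |α₀ - α|)) := by
  rcases hne.lt_or_gt with h | h
  · rw [max_eq_right h.le, abs_sub_comm, abs_of_pos (sub_pos.2 h)]
    exact tendsto_exp_mul_twoExpTail_of_lt hα₀ h
  · rw [max_eq_left h.le, abs_of_pos (sub_pos.2 h)]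
    simp_rw [twoExpTail_comm α₀ α]
    exact tendsto_exp_mul_twoExpTail_of_lt hα h

end TwoExpTail

lemma one_sub_measureReal_add_le_eq_integral {Ω β : Type*} [MeasurableSpace Ω]
    [MeasurableSpace β] {P : Measure Ω} [IsProbabilityMeasure P] {Z : Ω → ℝ} {V : Ω → β}
    (hZ : Measurable Z) (hV : Measurable V) (hind : IndepFun Z V P) {f : β → ℝ}
    (hf : Measurable f) (t : ℝ) :
    1 - P.real {ω | Z ω + f (V ω) ≤ t} = ∫ z, (P.map V).real {v | t - z < f v} ∂(P.map Z) := by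
  have hS : MeasurableSet {p : ℝ × β | t < p.1 + f p.2} :=
    measurableSet_lt measurable_const (by fun_prop)
  have hslice (z : ℝ) : Prod.mk z ⁻¹' {p : ℝ × β | t < p.1 + f p.2} = {v | t - z < f v} := by
    ext v
    simp only [mem_preimage, mem_ofPred_eq, sub_lt_iff_lt_add']
  calc 1 - P.real {ω | Z ω + f (V ω) ≤ t}
      = P.real ((fun ω => (Z ω, V ω)) ⁻¹' {p | t < p.1 + f p.2}) := by
        rw [← probReal_compl_eq_one_sub (measurableSet_le (by fun_prop) measurable_const)]
        congr 1 with ω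
        simp
    _ = ((P.map Z).prod (P.map V)).real {p | t < p.1 + f p.2} := by
        rw [← (indepFun_iff_map_prod_eq_prod_map_map hZ.aemeasurable hV.aemeasurable).1 hind,
          map_measureReal_apply (hZ.prodMk hV) hS]
    _ = ∫ z, (P.map V).real {v | t - z < f v} ∂(P.map Z) := by
        rw [measureReal_def, Measure.prod_apply hS, ← integral_toReal
          (measurable_measure_prodMk_left hS).aemeasurable
          (ae_of_all _ fun _ => measure_lt_top _ _)]
        simp_rw [hslice, measureReal_def]

theorem tendsto_nat_mul_integral_of_tendsto_exp_mul {μ : Measure ℝ} {g : ℝ → ℝ} {a K : ℝ}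
    (ha : 0 < a) (hg : Measurable g) (hbound : ∀ s, ‖g s‖ ≤ K * exp (-s / a))
    (hlim : Tendsto (fun s => exp (s / a) * g s) atTop (𝓝 K))
    (hμ : Integrable (fun z => exp (a⁻¹ * z)) μ) (c : ℝ) :
    Tendsto (fun n : ℕ => n * ∫ z, g (c + a * log n - z) ∂μ) atTop
      (𝓝 (K * exp (-c / a) * mgf id μ a⁻¹)) := by
  have hshift (n : ℕ) (hn : 0 < n) (z : ℝ) :
      (n : ℝ) = exp ((c + a * log n - z) / a) * exp ((z - c) / a) := by
    rw [← exp_add, show (c + a * log n - z) / a + (z - c) / a = log n by field_simp; ring,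
      exp_log (by positivity)]
  have hexp_shift (z : ℝ) : exp ((z - c) / a) = exp (-c / a) * exp (a⁻¹ * z) := by
    rw [← exp_add]
    ring_nf
  have hdom : Integrable (fun z => K * exp ((z - c) / a)) μ := by
    simp_rw [hexp_shift, ← mul_assoc]
    exact hμ.const_mul _
  have hlog : Tendsto (fun n : ℕ => a * log n) atTop atTop :=
    (tendsto_log_atTop.comp tendsto_natCast_atTop_atTop).const_mul_atTop ha
  have hconv : Tendsto (fun n : ℕ => ∫ z, n * g (c + a * log n - z) ∂μ) atTop
      (𝓝 (∫ z, K * exp ((z - c) / a) ∂μ)) := by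
    refine tendsto_integral_filter_of_dominated_convergence _
      (Eventually.of_forall fun n => ?_)
      ((eventually_gt_atTop 0).mono fun n hn => ae_of_all _ fun z => ?_) hdom
      (ae_of_all _ fun z => ?_)
    · exact (measurable_const.mul
        (hg.comp (measurable_const.sub measurable_id))).aestronglyMeasurable
    · set s := c + a * log n - z
      calc ‖(n : ℝ) * g s‖ = exp (s / a) * exp ((z - c) / a) * ‖g s‖ := by
            rw [norm_mul, Real.norm_natCast, hshift n hn z]
        _ ≤ exp (s / a) * exp ((z - c) / a) * (K * exp (-s / a)) := by gcongr; exact hbound s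
        _ = K * exp ((z - c) / a) * (exp (s / a) * exp (-s / a)) := by ring
        _ = K * exp ((z - c) / a) := by
            rw [← exp_add, neg_div, add_neg_cancel, exp_zero, mul_one]
    · have hs : Tendsto (fun n : ℕ => c + a * log n - z) atTop atTop :=
        (tendsto_atTop_add_const_right _ (c - z) hlog).congr fun n => by ring
      refine ((hlim.comp hs).mul_const (exp ((z - c) / a))).congr'
        ((eventually_gt_atTop 0).mono fun n hn => ?_)
      simp only [Function.comp_apply]
      rw [mul_right_comm, ← hshift n hn z]
  have hvalue : ∫ z, K * exp ((z - c) / a) ∂μ = K * exp (-c / a) * mgf id μ a⁻¹ := by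
    simp_rw [mgf, id, hexp_shift, ← mul_assoc, integral_const_mul]
  simpa only [integral_const_mul, hvalue] using hconv

lemma one_sub_measureReal_le_eq_integral_twoExpTail {Ω : Type*} [MeasureSpace Ω]
    [IsProbabilityMeasure (ℙ : Measure Ω)] {Z E₀ E₁ : Ω → ℝ} (hZ : Measurable Z)
    (hE₀ : Measurable E₀) (hE₁ : Measurable E₁) (hlawE₀ : Measure.map E₀ ℙ = expMeasure1)
    (hlawE₁ : Measure.map E₁ ℙ = expMeasure1) (hindep : iIndepFun ![Z, E₀, E₁] ℙ)
    (α₀ α t : ℝ) :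
    1 - (ℙ {ω | Z ω + α₀ * E₀ ω + α * E₁ ω ≤ t}).toReal
      = ∫ z, twoExpTail α₀ α (t - z) ∂(Measure.map Z ℙ) := by
  have hmeas (i : Fin 3) : Measurable (![Z, E₀, E₁] i) := by fin_cases i <;> assumption
  have hZE : IndepFun Z (fun ω => (E₀ ω, E₁ ω)) ℙ := by
    simpa using (hindep.indepFun_prodMk hmeas 1 2 0 (by decide) (by decide)).symm
  have hlawE : Measure.map (fun ω => (E₀ ω, E₁ ω)) ℙ = expMeasure1.prod expMeasure1 := by
    rw [(indepFun_iff_map_prod_eq_prod_map_map hE₀.aemeasurable hE₁.aemeasurable).1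
      (by simpa using hindep.indepFun (i := 1) (j := 2) (by decide)), hlawE₀, hlawE₁]
  simpa only [twoExpTail, measureReal_def, add_assoc, hlawE] using
    one_sub_measureReal_add_le_eq_integral hZ (hE₀.prodMk hE₁) hZE
      (f := fun q => α₀ * q.1 + α * q.2) (by fun_prop) t

theorem tail_limit_normal_plus_two_exponentials
    {Ω : Type*} [MeasureSpace Ω] [IsProbabilityMeasure (ℙ : Measure Ω)]
    (Z E₀ E₁ : Ω → ℝ) (hZ : Measurable Z) (hE₀ : Measurable E₀) (hE₁ : Measurable E₁)
    (hlawZ : Measure.map Z ℙ = gaussianReal 0 1)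
    (hlawE₀ : Measure.map E₀ ℙ = expMeasure1)
    (hlawE₁ : Measure.map E₁ ℙ = expMeasure1)
    (hindep : iIndepFun ![Z, E₀, E₁] ℙ)
    (α₀ α : ℝ) (hα₀ : 0 < α₀) (hα : 0 < α) (hne : α₀ ≠ α)
    (x : ℝ) (hx : 0 < x)
    (αs c : ℝ) (hαs : αs = max α₀ α)
    (hc : c = 0.5 / αs + αs * Real.log (αs / |α₀ - α|) - αs * Real.log x) :
    Tendsto (fun n : ℕ =>
        (n : ℝ) *
          (1 - (ℙ {ω | Z ω + α₀ * E₀ ω + α * E₁ ω ≤ c + αs * Real.log n}).toReal))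
      atTop (nhds x) := by
  have hαs_pos : 0 < αs := hαs ▸ lt_max_of_lt_left hα₀
  have hK : 0 < αs / |α₀ - α| := div_pos hαs_pos (abs_pos.2 (sub_ne_zero.2 hne))
  have htail :=
    one_sub_measureReal_le_eq_integral_twoExpTail hZ hE₀ hE₁ hlawE₀ hlawE₁ hindep α₀ α
  rw [hlawZ] at htail
  have hbound := twoExpTail_le hα₀ hα hne
  have hasymp := tendsto_exp_mul_twoExpTail hα₀ hα hne
  rw [← hαs] at hbound hasymp
  have hlim := tendsto_nat_mul_integral_of_tendsto_exp_mul hαs_pos measurable_twoExpTail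
    (fun s => (norm_of_nonneg (twoExpTail_nonneg s)).trans_le (hbound s)) hasymp
    (integrable_exp_mul_gaussianReal (μ := 0) (v := 1) _) c
  have hvalue : -c / αs + αs⁻¹ ^ 2 / 2 = log x - log (αs / |α₀ - α|) := by
    rw [hc]
    field_simp
    norm_num
    ring
  simp only [mgf_id_gaussianReal, NNReal.coe_one, zero_mul, zero_add, one_mul] at hlim
  simp_rw [htail]
  rwa [mul_assoc, ← exp_add, hvalue, exp_sub, exp_log hx, exp_log hK,
    mul_div_cancel₀ _ hK.ne'] at hlim
end

section
/- Let Z be a standard normal random variable and V₀, V₁ i.i.d. random variables with the Pareto(1, k) distribution for some k > 1, with (Z, V₀, V₁) mutually independent, and let α₀, α₁ > 0. Then c^k · P(Z + α₀·V₀ + α₁·V₁ > c) → α₀^k + α₁^k as c → ∞. -/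
open MeasureTheory ProbabilityTheory Filter Set
open scoped Topology

/-!
A Pareto summand has the exact power tail `P(αV > c) = α^k c^(-k)` for `c ≥ α`, and a sum of two
independent nonnegative variables with tails `~ L₀ c^(-k)` and `~ L₁ c^(-k)` has tail
`~ (L₀ + L₁) c^(-k)`, because a large sum needs one large summand. With `m = c^(2/3)`, so that
`m = o(c)` but `c = o(m²)`, the event `{X + Y > c}` contains `{X > c} ∪ {Y > c}` and is contained
in `{X > c - m} ∪ {Y > c - m} ∪ {X > m, Y > m}`, and the last event has probability
`O(m^(-2k)) = o(c^(-k))`. Adding the Gaussian does not change the asymptotics since its tail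
decays faster than any power: `{Z > -m, W > c + m} ⊆ {Z + W > c} ⊆ {Z > m} ∪ {W > c - m}`.
-/

theorem tendsto_rpow_mul_comp_of_tendsto_div_self {f a : ℝ → ℝ} {k L : ℝ}
    (hf : Tendsto (fun c => c ^ k * f c) atTop (𝓝 L))
    (ha : Tendsto (fun c => a c / c) atTop (𝓝 1)) :
    Tendsto (fun c => c ^ k * f (a c)) atTop (𝓝 L) := by
  have ha_top : Tendsto a atTop atTop := by
    refine (ha.pos_mul_atTop one_pos tendsto_id).congr' ?_
    filter_upwards [eventually_ne_atTop 0] with c hc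
    exact div_mul_cancel₀ _ hc
  have hratio : Tendsto (fun c => (c / a c) ^ k) atTop (𝓝 1) := by
    have := (ha.inv₀ one_ne_zero).rpow_const (p := k) (Or.inl (by norm_num))
    simpa only [inv_div, inv_one, Real.one_rpow] using this
  have := hratio.mul (hf.comp ha_top)
  rw [one_mul] at this
  refine this.congr' ?_
  filter_upwards [eventually_gt_atTop 0, ha_top.eventually_gt_atTop 0] with c hc hac
  rw [Function.comp_apply, Real.div_rpow hc.le hac.le, ← mul_assoc,
    div_mul_cancel₀ _ (Real.rpow_pos_of_pos hac k).ne']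

theorem tendsto_add_mul_rpow_div_self (t : ℝ) :
    Tendsto (fun c : ℝ => (c + t * c ^ (2 / 3 : ℝ)) / c) atTop (𝓝 1) := by
  have := ((tendsto_rpow_neg_atTop (by norm_num : (0 : ℝ) < 1 / 3)).const_mul t).const_add 1
  rw [mul_zero, add_zero] at this
  refine this.congr' ?_
  filter_upwards [eventually_gt_atTop 0] with c hc
  rw [add_div, div_self hc.ne', mul_div_assoc, ← Real.rpow_sub_one hc.ne']
  norm_num

section

variable {Ω : Type*} [MeasurableSpace Ω] {μ : Measure Ω} {X Y : Ω → ℝ}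

theorem ProbabilityTheory.IndepFun.measureReal_lt_inter_lt (h : IndepFun X Y μ) (a b : ℝ) :
    μ.real ({ω | a < X ω} ∩ {ω | b < Y ω}) = μ.real {ω | a < X ω} * μ.real {ω | b < Y ω} := by
  simp only [measureReal_def, ← ENNReal.toReal_mul]
  exact congrArg ENNReal.toReal
    (h.measure_inter_preimage_eq_mul (Ioi a) (Ioi b) measurableSet_Ioi measurableSet_Ioi)

theorem measureReal_lt_add_le [IsFiniteMeasure μ] (X Y : Ω → ℝ) (c m : ℝ) :
    μ.real {ω | c < X ω + Y ω} ≤ μ.real {ω | m < X ω} + μ.real {ω | c - m < Y ω} := by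
  refine (measureReal_mono fun ω (hω : c < X ω + Y ω) => ?_).trans (measureReal_union_le _ _)
  by_contra h
  simp only [mem_union, mem_ofPred_eq, not_or, not_lt] at h
  linarith

theorem ProbabilityTheory.IndepFun.mul_measureReal_lt_le_measureReal_lt_add [IsFiniteMeasure μ]
    (h : IndepFun X Y μ) (c m : ℝ) :
    μ.real {ω | -m < X ω} * μ.real {ω | c + m < Y ω} ≤ μ.real {ω | c < X ω + Y ω} := by
  rw [← h.measureReal_lt_inter_lt]
  refine measureReal_mono fun ω ⟨(hX : -m < X ω), (hY : c + m < Y ω)⟩ => ?_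
  show c < X ω + Y ω
  linarith

theorem ProbabilityTheory.IndepFun.measureReal_lt_add_le_add_mul [IsFiniteMeasure μ]
    (h : IndepFun X Y μ) (c m : ℝ) :
    μ.real {ω | c < X ω + Y ω} ≤ μ.real {ω | c - m < X ω} + μ.real {ω | c - m < Y ω}
      + μ.real {ω | m < X ω} * μ.real {ω | m < Y ω} := by
  have hsub : {ω | c < X ω + Y ω} ⊆ {ω | c - m < X ω} ∪ {ω | c - m < Y ω}
      ∪ {ω | m < X ω} ∩ {ω | m < Y ω} := by
    intro ω (hω : c < X ω + Y ω)
    by_contra h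
    simp only [mem_union, mem_inter_iff, mem_ofPred_eq, not_or, not_and_or, not_lt] at h
    obtain ⟨⟨hX, hY⟩, hXm | hYm⟩ := h <;> linarith
  rw [← h.measureReal_lt_inter_lt]
  exact (measureReal_mono hsub).trans
    ((measureReal_union_le _ _).trans (add_le_add_left (measureReal_union_le _ _) _))

theorem ProbabilityTheory.IndepFun.add_sub_mul_le_measureReal_lt_add [IsFiniteMeasure μ]
    (h : IndepFun X Y μ) (hY : Measurable Y) (hX₀ : ∀ᵐ ω ∂μ, 0 ≤ X ω) (hY₀ : ∀ᵐ ω ∂μ, 0 ≤ Y ω)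
    (c : ℝ) :
    μ.real {ω | c < X ω} + μ.real {ω | c < Y ω} - μ.real {ω | c < X ω} * μ.real {ω | c < Y ω}
      ≤ μ.real {ω | c < X ω + Y ω} := by
  rw [← h.measureReal_lt_inter_lt, ← measureReal_union_add_inter (measurableSet_lt
    measurable_const hY), add_sub_cancel_right]
  refine ENNReal.toReal_mono (measure_ne_top _ _) (measure_mono_ae ?_)
  filter_upwards [hX₀, hY₀] with ω hX hY hω
  show c < X ω + Y ω
  rcases hω with hω | hω
  · exact lt_add_of_lt_of_nonneg hω hY
  · exact lt_add_of_nonneg_of_lt hX hω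

theorem tendsto_measureReal_lt_atBot (μ : Measure Ω) [IsProbabilityMeasure μ] (X : Ω → ℝ) :
    Tendsto (fun x => μ.real {ω | x < X ω}) atBot (𝓝 1) := by
  have hanti : Antitone fun x : ℝ => {ω | x < X ω} :=
    fun x y hxy ω (hω : y < X ω) => lt_of_le_of_lt hxy hω
  have hunion : (⋃ x : ℝ, {ω | x < X ω}) = univ :=
    eq_univ_of_forall fun ω => mem_iUnion.2 ⟨X ω - 1, sub_one_lt (X ω)⟩
  have := tendsto_measure_iUnion_atBot (μ := μ) hanti
  rw [hunion] at this
  simpa [Function.comp_def, measureReal_def] using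
    (ENNReal.tendsto_toReal (measure_ne_top μ univ)).comp this

theorem tendsto_rpow_mul_measureReal_lt_of_map_eq_gaussianReal [IsProbabilityMeasure μ]
    {m : ℝ} {v : NNReal} (hX : μ.map X = gaussianReal m v) (p : ℝ) :
    Tendsto (fun x => x ^ p * μ.real {ω | x < X ω}) atTop (𝓝 0) := by
  have hint : Integrable (fun ω => Real.exp (1 * X ω)) μ :=
    mgf_pos_iff.1 (by rw [mgf_gaussianReal hX]; exact Real.exp_pos _)
  have hchernoff (x : ℝ) : μ.real {ω | x < X ω} ≤ Real.exp (-x) * Real.exp (m + v / 2) := by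
    have := measure_ge_le_exp_mul_mgf x zero_le_one hint
    rw [mgf_gaussianReal hX, neg_one_mul] at this
    refine (measureReal_mono (s₂ := {ω | x ≤ X ω}) fun ω (hω : x < X ω) => hω.le).trans ?_
    simpa using this
  have hlim := (tendsto_rpow_mul_exp_neg_mul_atTop_nhds_zero p 1 one_pos).mul_const
    (Real.exp (m + v / 2))
  rw [zero_mul] at hlim
  refine tendsto_of_tendsto_of_tendsto_of_le_of_le' tendsto_const_nhds hlim ?_ ?_
  · filter_upwards [eventually_ge_atTop 0] with x hx
    positivity
  · filter_upwards [eventually_ge_atTop 0] with x hx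
    rw [neg_one_mul, mul_assoc]
    exact mul_le_mul_of_nonneg_left (hchernoff x) (by positivity)

theorem tendsto_rpow_mul_measureReal_const_mul_lt_of_pareto {V : Ω → ℝ} {k α : ℝ}
    (hV : ∀ x : ℝ, μ {ω | x < V ω} = ENNReal.ofReal (if 1 ≤ x then x ^ (-k) else 1))
    (hα : 0 < α) :
    Tendsto (fun c => c ^ k * μ.real {ω | c < α * V ω}) atTop (𝓝 (α ^ k)) := by
  refine tendsto_const_nhds.congr' ?_
  filter_upwards [eventually_ge_atTop α] with c hc
  have hc0 : 0 < c := hα.trans_le hc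
  have hset : {ω | c < α * V ω} = {ω | c / α < V ω} := by
    ext ω
    simp only [mem_ofPred_eq, div_lt_iff₀' hα]
  rw [measureReal_def, hset, hV, if_pos ((one_le_div hα).2 hc),
    ENNReal.toReal_ofReal (by positivity), Real.rpow_neg (by positivity),
    Real.div_rpow hc0.le hα.le]
  field_simp

theorem ae_pos_of_pareto [IsProbabilityMeasure μ] {V : Ω → ℝ} {k : ℝ} (hVm : Measurable V)
    (hV : ∀ x : ℝ, μ {ω | x < V ω} = ENNReal.ofReal (if 1 ≤ x then x ^ (-k) else 1)) :
    ∀ᵐ ω ∂μ, 0 < V ω := by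
  rw [ae_iff_measure_eq (measurableSet_lt measurable_const hVm).nullMeasurableSet, hV,
    if_neg (by norm_num), ENNReal.ofReal_one, measure_univ]

theorem ProbabilityTheory.IndepFun.tendsto_rpow_mul_measureReal_lt_add [IsProbabilityMeasure μ]
    {k : ℝ} (h : IndepFun X Y μ)
    (hY : Measurable Y) (hX₀ : ∀ᵐ ω ∂μ, 0 ≤ X ω) (hY₀ : ∀ᵐ ω ∂μ, 0 ≤ Y ω) (hk : 0 < k)
    {L₀ L₁ : ℝ} (hXt : Tendsto (fun c => c ^ k * μ.real {ω | c < X ω}) atTop (𝓝 L₀))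
    (hYt : Tendsto (fun c => c ^ k * μ.real {ω | c < Y ω}) atTop (𝓝 L₁)) :
    Tendsto (fun c => c ^ k * μ.real {ω | c < X ω + Y ω}) atTop (𝓝 (L₀ + L₁)) := by
  have hm : Tendsto (fun c : ℝ => c ^ (2 / 3 : ℝ)) atTop atTop := tendsto_rpow_atTop (by norm_num)
  have hsub : Tendsto (fun c : ℝ => (c - c ^ (2 / 3 : ℝ)) / c) atTop (𝓝 1) := by
    simpa [sub_eq_add_neg] using tendsto_add_mul_rpow_div_self (-1)
  have hYzero : Tendsto (fun c => μ.real {ω | c < Y ω}) atTop (𝓝 0) := by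
    have := (tendsto_rpow_neg_atTop hk).mul hYt
    rw [zero_mul] at this
    refine this.congr' ?_
    filter_upwards [eventually_gt_atTop 0] with c hc
    rw [← mul_assoc, ← Real.rpow_add hc, neg_add_cancel, Real.rpow_zero, one_mul]
  have hlower := (hXt.add hYt).sub (hXt.mul hYzero)
  rw [mul_zero, sub_zero] at hlower
  have hupper := ((tendsto_rpow_mul_comp_of_tendsto_div_self hXt hsub).add
    (tendsto_rpow_mul_comp_of_tendsto_div_self hYt hsub)).add
    (((tendsto_rpow_neg_atTop (by positivity : 0 < k / 3)).mul (hXt.comp hm)).mul (hYt.comp hm))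
  rw [zero_mul, zero_mul, add_zero] at hupper
  refine tendsto_of_tendsto_of_tendsto_of_le_of_le' hlower hupper ?_ ?_
  · filter_upwards [eventually_ge_atTop 0] with c hc
    have := mul_le_mul_of_nonneg_left (h.add_sub_mul_le_measureReal_lt_add hY hX₀ hY₀ c)
      (Real.rpow_nonneg hc k)
    linarith
  · filter_upwards [eventually_gt_atTop 0] with c hc
    have hsplit : c ^ k = c ^ (-(k / 3)) * (c ^ (2 / 3 : ℝ)) ^ k * (c ^ (2 / 3 : ℝ)) ^ k := by
      rw [← Real.rpow_mul hc.le, ← Real.rpow_add hc, ← Real.rpow_add hc]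
      ring_nf
    have := mul_le_mul_of_nonneg_left (h.measureReal_lt_add_le_add_mul c (c ^ (2 / 3 : ℝ)))
      (Real.rpow_nonneg hc.le k)
    simp only [Function.comp_apply]
    rw [hsplit] at this ⊢
    linarith

theorem ProbabilityTheory.IndepFun.tendsto_rpow_mul_measureReal_lt_add_of_rapid_decay
    [IsProbabilityMeasure μ] {k L : ℝ} (h : IndepFun X Y μ)
    (hXt : ∀ p : ℝ, Tendsto (fun x => x ^ p * μ.real {ω | x < X ω}) atTop (𝓝 0))
    (hYt : Tendsto (fun c => c ^ k * μ.real {ω | c < Y ω}) atTop (𝓝 L)) :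
    Tendsto (fun c => c ^ k * μ.real {ω | c < X ω + Y ω}) atTop (𝓝 L) := by
  have hm : Tendsto (fun c : ℝ => c ^ (2 / 3 : ℝ)) atTop atTop := tendsto_rpow_atTop (by norm_num)
  have hadd : Tendsto (fun c : ℝ => (c + c ^ (2 / 3 : ℝ)) / c) atTop (𝓝 1) := by
    simpa using tendsto_add_mul_rpow_div_self 1
  have hsub : Tendsto (fun c : ℝ => (c - c ^ (2 / 3 : ℝ)) / c) atTop (𝓝 1) := by
    simpa [sub_eq_add_neg] using tendsto_add_mul_rpow_div_self (-1)
  have hlower := ((tendsto_measureReal_lt_atBot μ X).comp (tendsto_neg_atTop_atBot.comp hm)).mul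
    (tendsto_rpow_mul_comp_of_tendsto_div_self hYt hadd)
  rw [one_mul] at hlower
  have hXm : Tendsto (fun c : ℝ => c ^ k * μ.real {ω | c ^ (2 / 3 : ℝ) < X ω}) atTop (𝓝 0) := by
    refine ((hXt (3 / 2 * k)).comp hm).congr' ?_
    filter_upwards [eventually_ge_atTop 0] with c hc
    rw [Function.comp_apply, ← Real.rpow_mul hc]
    ring_nf
  have hupper := hXm.add (tendsto_rpow_mul_comp_of_tendsto_div_self hYt hsub)
  rw [zero_add] at hupper
  refine tendsto_of_tendsto_of_tendsto_of_le_of_le' hlower hupper ?_ ?_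
  · filter_upwards [eventually_ge_atTop 0] with c hc
    have := mul_le_mul_of_nonneg_left
      (h.mul_measureReal_lt_le_measureReal_lt_add c (c ^ (2 / 3 : ℝ))) (Real.rpow_nonneg hc k)
    simp only [Function.comp_apply]
    linarith
  · filter_upwards [eventually_ge_atTop 0] with c hc
    have := mul_le_mul_of_nonneg_left (measureReal_lt_add_le (μ := μ) X Y c (c ^ (2 / 3 : ℝ)))
      (Real.rpow_nonneg hc k)
    linarith

end

theorem pareto_sum_tail_asymptotics
    {Ω : Type*} [MeasureSpace Ω] [IsProbabilityMeasure (ℙ : Measure Ω)]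
    (Z V₀ V₁ : Ω → ℝ) (hZ : Measurable Z) (hV₀ : Measurable V₀) (hV₁ : Measurable V₁)
    (hlawZ : Measure.map Z ℙ = gaussianReal 0 1)
    (k : ℝ) (hk : 1 < k)
    (hlawV₀ : ∀ x : ℝ, ℙ {ω | x < V₀ ω} = ENNReal.ofReal (if 1 ≤ x then x ^ (-k) else 1))
    (hlawV₁ : ∀ x : ℝ, ℙ {ω | x < V₁ ω} = ENNReal.ofReal (if 1 ≤ x then x ^ (-k) else 1))
    (hindep : iIndepFun ![Z, V₀, V₁] ℙ)
    (α₀ α₁ : ℝ) (hα₀ : 0 < α₀) (hα₁ : 0 < α₁) :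
    Tendsto (fun c : ℝ =>
        c ^ k * (ℙ {ω | c < Z ω + α₀ * V₀ ω + α₁ * V₁ ω}).toReal)
      atTop (nhds (α₀ ^ k + α₁ ^ k)) := by
  have hmeas : ∀ i, Measurable (![Z, V₀, V₁] i) := fun i => by fin_cases i <;> assumption
  have hV : IndepFun (fun ω => α₀ * V₀ ω) (fun ω => α₁ * V₁ ω) ℙ :=
    (hindep.indepFun (i := 1) (j := 2) (by decide)).comp
      (measurable_const_mul α₀) (measurable_const_mul α₁)
  have hZV : IndepFun Z (fun ω => α₀ * V₀ ω + α₁ * V₁ ω) ℙ :=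
    (hindep.indepFun_prodMk hmeas 1 2 0 (by decide) (by decide)).symm.comp measurable_id
      (by fun_prop : Measurable fun p : ℝ × ℝ => α₀ * p.1 + α₁ * p.2)
  have hV₀pos := (ae_pos_of_pareto hV₀ hlawV₀).mono fun ω h => (mul_pos hα₀ h).le
  have hV₁pos := (ae_pos_of_pareto hV₁ hlawV₁).mono fun ω h => (mul_pos hα₁ h).le
  have hW := hV.tendsto_rpow_mul_measureReal_lt_add (hV₁.const_mul α₁) hV₀pos hV₁pos
    (by linarith) (tendsto_rpow_mul_measureReal_const_mul_lt_of_pareto hlawV₀ hα₀)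
    (tendsto_rpow_mul_measureReal_const_mul_lt_of_pareto hlawV₁ hα₁)
  simp only [add_assoc]
  exact hZV.tendsto_rpow_mul_measureReal_lt_add_of_rapid_decay
    (tendsto_rpow_mul_measureReal_lt_of_map_eq_gaussianReal hlawZ) hW
end

section
/- On a probability space let X₁, X₂ be independent standard normal random variables; fix ρ ∈ (−1, 1) and set Z₁ = X₁, Z₂ = ρX₁ + √(1−ρ²)X₂. Let ε₀, ε₁, ε₂ be i.i.d. nonnegative random variables with common cdf F_ε such that (X₁, X₂, ε₀, ε₁, ε₂) are mutually independent; assume F_ε is subexponential and that for every a > 1, F̄_ε(a·c)/F̄_ε(c) → 0 as c → ∞. Let α₁₀, α₂₀ > 0 and α₁, α₂ ≥ 0 with α₁₀ > α₁ and α₂₀ > α₂, and set Wᵢ = Zᵢ + αᵢ₀·ε₀ + αᵢ·εᵢ for i = 1, 2. Then P(W₁ > Q₁(1 − q), W₂ > Q₂(1 − q))/q → 1 as q → 0⁺; that is, (W₁, W₂) has upper tail dependence coefficient λ_U = 1. -/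
/-!
Write `Wᵢ = αᵢ₀ ε₀ + Yᵢ` with `Yᵢ = Zᵢ + αᵢ εᵢ`. Subexponentiality makes `F̄` long-tailed, hence
heavier than every exponential, so the Gaussian part of `Yᵢ` is negligible against `F̄ (u / αᵢ₀)`;
so is `αᵢ εᵢ`, because `αᵢ < αᵢ₀` and `F̄ (a c) = o(F̄ c)` for `a > 1`. Conditioning on `ε₀` and
comparing `Yᵢ` with an independent copy of `ε₀` then gives `P(Wᵢ > t) ≤ (1 + o(1)) F̄ (t / αᵢ₀)`:
the tail of each `Wᵢ` is carried by the common factor. At level `q` both marginal quantiles thus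
correspond to `ε₀` exceeding essentially the same threshold `c`, and as `F̄` is long-tailed,
`ε₀ > c + const` already forces both exceedances with probability `(1 - o(1)) q`, while the joint
exceedance probability never exceeds `q`.
-/

open MeasureTheory ProbabilityTheory Filter Set Topology Asymptotics Real

section Quantile

variable {μ : Measure ℝ} {p z : ℝ}

noncomputable def quantile (μ : Measure ℝ) (p : ℝ) : ℝ := sInf {z | p ≤ cdf μ z}

lemma nonempty_setOf_le_cdf (hp : p < 1) : {z | p ≤ cdf μ z}.Nonempty :=
  ((tendsto_cdf_atTop μ).eventually_const_le hp).exists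

lemma bddBelow_setOf_le_cdf (hp : 0 < p) : BddBelow {z | p ≤ cdf μ z} := by
  obtain ⟨z₀, hz₀⟩ := eventually_atBot.1 ((tendsto_cdf_atBot μ).eventually_lt_const hp)
  refine ⟨z₀, fun z hz => le_of_not_gt fun hlt => ?_⟩
  exact (hz₀ z hlt.le).not_ge hz

lemma le_cdf_quantile (hp : p < 1) : p ≤ cdf μ (quantile μ p) := by
  refine ge_of_tendsto (((cdf μ).right_continuous _).mono Ioi_subset_Ici_self)
    (eventually_nhdsWithin_of_forall fun z hz => ?_)
  obtain ⟨y, hy, hyz⟩ := exists_lt_of_csInf_lt (nonempty_setOf_le_cdf hp) hz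
  exact hy.trans ((cdf μ).mono hyz.le)

lemma cdf_lt_of_lt_quantile (hp : 0 < p) (hz : z < quantile μ p) : cdf μ z < p :=
  not_le.1 (notMem_of_lt_csInf (s := {z | p ≤ cdf μ z}) hz (bddBelow_setOf_le_cdf hp))

lemma tendsto_quantile_one_sub (h : ∀ z, cdf μ z < 1) :
    Tendsto (fun q => quantile μ (1 - q)) (𝓝[>] 0) atTop := by
  refine tendsto_atTop.2 fun M => ?_
  have hM : 0 < 1 - cdf μ M := sub_pos.2 (h M)
  filter_upwards [Ioo_mem_nhdsGT hM] with q ⟨hq₀, hqM⟩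
  refine le_csInf (nonempty_setOf_le_cdf (by linarith)) fun z hz => ?_
  by_contra! hzM
  have : 1 - q ≤ cdf μ z := hz
  linarith [(cdf μ).mono hzM.le]

end Quantile

section Survival

variable {Ω : Type*} {mΩ : MeasurableSpace Ω} {μ : Measure Ω} [IsProbabilityMeasure μ]
  {X : Ω → ℝ}

lemma measureReal_lt_eq_one_sub_measureReal_le (hX : Measurable X) (t : ℝ) :
    μ.real {ω | t < X ω} = 1 - μ.real {ω | X ω ≤ t} := by
  rw [← probReal_compl_eq_one_sub (measurableSet_le hX measurable_const)]
  congr 1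
  ext ω
  simp

lemma cdf_map_eq_measureReal_le (hX : Measurable X) (t : ℝ) :
    cdf (μ.map X) t = μ.real {ω | X ω ≤ t} := by
  have := Measure.isProbabilityMeasure_map (μ := μ) hX.aemeasurable
  rw [cdf_eq_real, map_measureReal_apply hX measurableSet_Iic]
  rfl

lemma quantile_map_eq (hX : Measurable X) (p : ℝ) :
    quantile (μ.map X) p = sInf {z | p ≤ μ.real {ω | X ω ≤ z}} := by
  simp only [quantile, cdf_map_eq_measureReal_le hX]

lemma measureReal_lt_eq_one_sub_cdf (hX : Measurable X) (t : ℝ) :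
    μ.real {ω | t < X ω} = 1 - cdf (μ.map X) t := by
  rw [cdf_map_eq_measureReal_le hX, measureReal_lt_eq_one_sub_measureReal_le hX]

lemma antitone_measureReal_lt : Antitone fun t => μ.real {ω | t < X ω} :=
  fun _ _ hab => measureReal_mono fun _ hω => hab.trans_lt hω

lemma tendsto_measureReal_lt_atTop (hX : Measurable X) :
    Tendsto (fun t => μ.real {ω | t < X ω}) atTop (𝓝 0) := by
  simp_rw [measureReal_lt_eq_one_sub_cdf hX]
  simpa using (tendsto_cdf_atTop (μ.map X)).const_sub 1

lemma measureReal_quantile_lt_le (hX : Measurable X) {q : ℝ} (hq : 0 < q) :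
    μ.real {ω | quantile (μ.map X) (1 - q) < X ω} ≤ q := by
  have := le_cdf_quantile (μ := μ.map X) (p := 1 - q) (by linarith)
  rw [measureReal_lt_eq_one_sub_cdf hX]
  linarith

lemma lt_measureReal_lt_of_lt_quantile (hX : Measurable X) {q : ℝ} (hq : q < 1)
    (hz : z < quantile (μ.map X) (1 - q)) : q < μ.real {ω | z < X ω} := by
  have := cdf_lt_of_lt_quantile (by linarith) hz
  rw [measureReal_lt_eq_one_sub_cdf hX]
  linarith

end Survival

section Independence

variable {Ω : Type*} {mΩ : MeasurableSpace Ω} {μ : Measure Ω}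

lemma ProbabilityTheory.IndepFun.measureReal_inter_preimage_eq_mul {β γ : Type*}
    {mβ : MeasurableSpace β} {mγ : MeasurableSpace γ} {X : Ω → β} {Y : Ω → γ}
    (h : IndepFun X Y μ) {s : Set β} {t : Set γ} (hs : MeasurableSet s) (ht : MeasurableSet t) :
    μ.real (X ⁻¹' s ∩ Y ⁻¹' t) = μ.real (X ⁻¹' s) * μ.real (Y ⁻¹' t) := by
  simp only [measureReal_def, h.measure_inter_preimage_eq_mul s t hs ht, ENNReal.toReal_mul]

lemma measureReal_lt_eq_of_map_eq {X X' : Ω → ℝ} (hX : Measurable X) (hX' : Measurable X')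
    (hlaw : μ.map X = μ.map X') (t : ℝ) : μ.real {ω | t < X ω} = μ.real {ω | t < X' ω} := by
  change μ.real (X ⁻¹' Ioi t) = μ.real (X' ⁻¹' Ioi t)
  rw [← map_measureReal_apply hX measurableSet_Ioi, hlaw,
    map_measureReal_apply hX' measurableSet_Ioi]

variable [IsFiniteMeasure μ] {V U V' U' : Ω → ℝ} {f : ℝ → ℝ}

lemma ProbabilityTheory.IndepFun.measure_comp_lt_eq_lintegral (hV : Measurable V)
    (hU : Measurable U) (h : IndepFun V U μ) (hf : Measurable f) :
    μ {ω | f (V ω) < U ω} = ∫⁻ v, μ {ω | f v < U ω} ∂(μ.map V) := by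
  have hS : MeasurableSet {p : ℝ × ℝ | f p.1 < p.2} :=
    measurableSet_lt (hf.comp measurable_fst) measurable_snd
  calc μ {ω | f (V ω) < U ω} = μ.map (fun ω => (V ω, U ω)) {p | f p.1 < p.2} :=
        (Measure.map_apply (hV.prodMk hU) hS).symm
    _ = ((μ.map V).prod (μ.map U)) {p | f p.1 < p.2} := by
        rw [(indepFun_iff_map_prod_eq_prod_map_map hV.aemeasurable hU.aemeasurable).1 h]
    _ = ∫⁻ v, μ.map U (Ioi (f v)) ∂(μ.map V) := Measure.prod_apply hS
    _ = _ := lintegral_congr fun v => Measure.map_apply hU measurableSet_Ioi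

lemma measureReal_comp_lt_le_of_indepFun (hV : Measurable V) (hU : Measurable U)
    (hV' : Measurable V') (hU' : Measurable U') (h : IndepFun V U μ) (h' : IndepFun V' U' μ)
    (hlaw : μ.map V = μ.map V') (hf : Measurable f) {k : ℝ} (hk : 0 ≤ k)
    (hdom : ∀ v, μ.real {ω | f v < U ω} ≤ k * μ.real {ω | f v < U' ω}) :
    μ.real {ω | f (V ω) < U ω} ≤ k * μ.real {ω | f (V' ω) < U' ω} := by
  have hdom' : ∀ v, μ {ω | f v < U ω} ≤ ENNReal.ofReal k * μ {ω | f v < U' ω} := fun v => by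
    rw [← ofReal_measureReal, ← ofReal_measureReal, ← ENNReal.ofReal_mul hk]
    exact ENNReal.ofReal_le_ofReal (hdom v)
  have : μ {ω | f (V ω) < U ω} ≤ ENNReal.ofReal k * μ {ω | f (V' ω) < U' ω} := by
    rw [h.measure_comp_lt_eq_lintegral hV hU hf, h'.measure_comp_lt_eq_lintegral hV' hU' hf, hlaw,
      ← lintegral_const_mul' _ _ ENNReal.ofReal_ne_top]
    exact lintegral_mono hdom'
  simpa [measureReal_def, ENNReal.toReal_mul, hk] using
    ENNReal.toReal_mono (ENNReal.mul_ne_top ENNReal.ofReal_ne_top (measure_ne_top _ _)) this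

end Independence

section LongTailed

def IsLongTailed (G : ℝ → ℝ) : Prop :=
  ∀ y, 0 ≤ y → Tendsto (fun t => G (t - y) / G t) atTop (𝓝 1)

variable {G : ℝ → ℝ}

lemma IsLongTailed.eventually_le_mul (hG : IsLongTailed G) (hpos : ∀ t, 0 < G t) {y r : ℝ}
    (hy : 0 ≤ y) (hr : 1 < r) : ∀ᶠ t in atTop, G (t - y) ≤ r * G t := by
  filter_upwards [(hG y hy).eventually_le_const hr] with t ht
  rwa [div_le_iff₀ (hpos t)] at ht

lemma IsLongTailed.isBigO_exp (hG : IsLongTailed G) (hpos : ∀ t, 0 < G t) (hanti : Antitone G)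
    {l : ℝ} (hl : 0 < l) : (fun t => exp (-(l * t))) =O[atTop] G := by
  obtain ⟨T, hT⟩ := eventually_atTop.1 (hG.eventually_le_mul hpos zero_le_one (one_lt_exp_iff.2 hl))
  have hstep : ∀ n : ℕ, G T ≤ exp (l * n) * G (T + n) := by
    intro n
    induction n with
    | zero => simp
    | succ n ih =>
      have := hT (T + (n + 1)) (by linarith [n.cast_nonneg (α := ℝ)])
      rw [show T + (n + 1) - 1 = T + n by ring] at this
      calc G T ≤ exp (l * n) * G (T + n) := ih
        _ ≤ exp (l * n) * (exp l * G (T + (n + 1))) := by gcongr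
        _ = exp (l * ↑(n + 1)) * G (T + ↑(n + 1)) := by
          push_cast; rw [← mul_assoc, ← exp_add]; ring_nf
  refine IsBigO.of_bound (exp (l * (1 - T)) / G T) ?_
  filter_upwards [eventually_ge_atTop T] with t ht
  set n := ⌈t - T⌉₊
  have hn : (n : ℝ) < t - T + 1 := Nat.ceil_lt_add_one (by linarith)
  have hGt : G T ≤ exp (l * (t - T + 1)) * G t :=
    (hstep n).trans (mul_le_mul (exp_le_exp.2 (by gcongr))
      (hanti (by linarith [Nat.le_ceil (t - T)]))
      (hpos _).le (exp_pos _).le)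
  rw [norm_of_nonneg (exp_pos _).le, norm_of_nonneg (hpos t).le, div_mul_eq_mul_div,
    le_div_iff₀ (hpos T)]
  calc exp (-(l * t)) * G T ≤ exp (-(l * t)) * (exp (l * (t - T + 1)) * G t) := by gcongr
    _ = exp (l * (1 - T)) * G t := by rw [← mul_assoc, ← exp_add]; ring_nf

lemma IsLongTailed.isLittleO_exp (hG : IsLongTailed G) (hpos : ∀ t, 0 < G t) (hanti : Antitone G)
    {l : ℝ} (hl : 0 < l) : (fun t => exp (-(l * t))) =o[atTop] G := by
  have hsmall : (fun t => exp (-(l / 2 * t))) =o[atTop] (fun _ => (1 : ℝ)) := by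
    refine (isLittleO_one_iff ℝ).2 (tendsto_exp_atBot.comp ?_)
    exact tendsto_neg_atTop_atBot.comp (tendsto_id.const_mul_atTop (by positivity))
  have := hsmall.mul_isBigO (hG.isBigO_exp hpos hanti (half_pos hl))
  simp only [one_mul, ← exp_add] at this
  exact this.congr_left fun t => by ring_nf

end LongTailed

section Subexponential

variable {Ω : Type*} {mΩ : MeasurableSpace Ω} {μ : Measure Ω} [IsProbabilityMeasure μ]
  {E₁ E₂ : Ω → ℝ} {G : ℝ → ℝ}

/-- The three summands are the probabilities of the disjoint events `{t < E₁}`,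
`{E₁ ≤ y, t < E₂}` and `{y < E₁ ≤ t, t - y < E₂}`. -/
lemma le_measureReal_lt_add_of_indepFun (hE₁ : Measurable E₁) (hE₂ : Measurable E₂)
    (hind : IndepFun E₁ E₂ μ) (hnn₁ : ∀ ω, 0 ≤ E₁ ω) (hnn₂ : ∀ ω, 0 ≤ E₂ ω)
    (hG₁ : ∀ t, μ.real {ω | t < E₁ ω} = G t) (hG₂ : ∀ t, μ.real {ω | t < E₂ ω} = G t)
    {y t : ℝ} (hyt : y ≤ t) :
    G t * (2 - G y) + (G y - G t) * G (t - y) ≤ μ.real {ω | t < E₁ ω + E₂ ω} := by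
  set A := E₁ ⁻¹' Ioi t
  set B := E₁ ⁻¹' Iic y ∩ E₂ ⁻¹' Ioi t
  set C := E₁ ⁻¹' Ioc y t ∩ E₂ ⁻¹' Ioi (t - y)
  have hA : μ.real A = G t := hG₁ t
  have hB : μ.real B = (1 - G y) * G t := by
    have hle : μ.real {ω | y < E₁ ω} = 1 - μ.real (E₁ ⁻¹' Iic y) := by
      rw [← probReal_compl_eq_one_sub (hE₁ measurableSet_Iic)]
      congr 1; ext; simp
    rw [hind.measureReal_inter_preimage_eq_mul measurableSet_Iic measurableSet_Ioi, ← hG₁, hle]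
    exact congr_arg₂ _ (by ring) (hG₂ t)
  have hC : μ.real C = (G y - G t) * G (t - y) := by
    have hsub : E₁ ⁻¹' Ioi t ⊆ E₁ ⁻¹' Ioi y := preimage_mono (Ioi_subset_Ioi hyt)
    rw [hind.measureReal_inter_preimage_eq_mul measurableSet_Ioc measurableSet_Ioi,
      ← Ioi_sdiff_Ioi, preimage_sdiff, measureReal_sdiff hsub (hE₁ measurableSet_Ioi)]
    exact congr_arg₂ _ (congr_arg₂ _ (hG₁ y) (hG₁ t)) (hG₂ _)
  have hABC : A ∪ B ∪ C ⊆ {ω | t < E₁ ω + E₂ ω} := by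
    rintro ω ((hω | ⟨-, hω⟩) | ⟨⟨hω, -⟩, hω'⟩)
    · exact (show t < E₁ ω from hω).trans_le (le_add_of_nonneg_right (hnn₂ ω))
    · exact (show t < E₂ ω from hω).trans_le (le_add_of_nonneg_left (hnn₁ ω))
    · change y < E₁ ω at hω
      change t - y < E₂ ω at hω'
      change t < E₁ ω + E₂ ω
      linarith
  have hdAB : Disjoint A B := disjoint_left.2 fun ω h₁ h₂ => by
    simp only [A, B, mem_inter_iff, mem_preimage, mem_Ioi, mem_Iic] at h₁ h₂
    linarith [h₂.1]
  have hdABC : Disjoint (A ∪ B) C := disjoint_left.2 fun ω h₁ h₂ => by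
    simp only [A, B, C, mem_union, mem_inter_iff, mem_preimage, mem_Ioi, mem_Iic, mem_Ioc] at h₁ h₂
    rcases h₁ with h₁ | h₁ <;> linarith [h₂.1.1, h₂.1.2]
  calc G t * (2 - G y) + (G y - G t) * G (t - y) = μ.real A + μ.real B + μ.real C := by
        rw [hA, hB, hC]; ring
    _ = μ.real (A ∪ B ∪ C) := by
        rw [measureReal_union hdABC ((hE₁ measurableSet_Ioc).inter (hE₂ measurableSet_Ioi)),
          measureReal_union hdAB ((hE₁ measurableSet_Iic).inter (hE₂ measurableSet_Ioi))]
    _ ≤ _ := measureReal_mono hABC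

lemma IsLongTailed.of_tendsto_measureReal_lt_add_div (hE₁ : Measurable E₁)
    (hE₂ : Measurable E₂) (hind : IndepFun E₁ E₂ μ) (hnn₁ : ∀ ω, 0 ≤ E₁ ω)
    (hnn₂ : ∀ ω, 0 ≤ E₂ ω) (hG₁ : ∀ t, μ.real {ω | t < E₁ ω} = G t)
    (hG₂ : ∀ t, μ.real {ω | t < E₂ ω} = G t) (hpos : ∀ t, 0 < G t)
    (hsub : Tendsto (fun t => μ.real {ω | t < E₁ ω + E₂ ω} / G t) atTop (𝓝 2)) :
    IsLongTailed G := by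
  intro y hy
  have hanti : Antitone G := fun a b hab => by
    simpa only [hG₁] using antitone_measureReal_lt (μ := μ) (X := E₁) hab
  have hG0 : Tendsto G atTop (𝓝 0) := by
    simpa only [hG₁] using tendsto_measureReal_lt_atTop (μ := μ) hE₁
  have hupper : Tendsto (fun t => (μ.real {ω | t < E₁ ω + E₂ ω} / G t - (2 - G y)) /
      (G y - G t)) atTop (𝓝 1) := by
    have := ((hsub.sub_const (2 - G y)).div (hG0.const_sub (G y)) (by simp [(hpos y).ne']))
    simpa [Pi.div_def, (hpos y).ne'] using this
  refine tendsto_of_tendsto_of_tendsto_of_le_of_le' tendsto_const_nhds hupper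
    (Eventually.of_forall fun t => ?_) ?_
  · rw [le_div_iff₀ (hpos t), one_mul]
    exact hanti (by linarith)
  · filter_upwards [hG0.eventually_lt_const (hpos y), eventually_ge_atTop y] with t hGt hyt
    have hkey := le_measureReal_lt_add_of_indepFun hE₁ hE₂ hind hnn₁ hnn₂ hG₁ hG₂ hyt
    rw [div_le_div_iff₀ (hpos t) (sub_pos.2 hGt), sub_mul, div_mul_eq_mul_div,
      le_sub_iff_add_le, le_div_iff₀ (hpos t)]
    nlinarith [hpos t]

end Subexponential

section LightTails

variable {Ω : Type*} {mΩ : MeasurableSpace Ω} {μ : Measure Ω} [IsProbabilityMeasure μ]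

lemma isBigO_measureReal_lt_exp_neg {Z : Ω → ℝ} (hZ : μ.map Z = gaussianReal 0 1) :
    (fun s => μ.real {ω | s < Z ω}) =O[atTop] (fun s => exp (-s)) := by
  have hmgf : mgf Z μ 1 = exp (1 / 2) := by rw [mgf_gaussianReal hZ]; norm_num
  have hint : Integrable (fun ω => exp (1 * Z ω)) μ := by
    rw [← mgf_pos_iff, hmgf]; exact exp_pos _
  refine IsBigO.of_bound (exp (1 / 2)) (Eventually.of_forall fun s => ?_)
  rw [norm_of_nonneg measureReal_nonneg, norm_of_nonneg (exp_pos _).le]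
  calc μ.real {ω | s < Z ω} ≤ μ.real {ω | s ≤ Z ω} := measureReal_mono fun ω (hω : s < Z ω) => hω.le
    _ ≤ exp (-1 * s) * mgf Z μ 1 := measure_ge_le_exp_mul_mgf s zero_le_one hint
    _ = exp (1 / 2) * exp (-s) := by rw [hmgf, neg_one_mul, mul_comm]

/-- Split `u` as `(1 - γ/α₀) u + γ (u/α₀)` with `α < β < γ < α₀`: the `Z` part is exponentially
small and the `ε` part sits `γ/β > 1` times further out than `u/α₀`. -/
lemma isLittleO_measureReal_lt_add_mul {Z ε : Ω → ℝ} (hεnn : ∀ ω, 0 ≤ ε ω) {G : ℝ → ℝ}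
    (hG : ∀ t, μ.real {ω | t < ε ω} = G t) (hlong : IsLongTailed G) (hpos : ∀ t, 0 < G t)
    (hratio : ∀ a, 1 < a → Tendsto (fun c => G (a * c) / G c) atTop (𝓝 0))
    (hZ : (fun s => μ.real {ω | s < Z ω}) =O[atTop] (fun s => exp (-s)))
    {α α₀ : ℝ} (hα : 0 ≤ α) (hαα₀ : α < α₀) :
    (fun u => μ.real {ω | u < Z ω + α * ε ω}) =o[atTop] (fun u => G (u / α₀)) := by
  have hα₀ : 0 < α₀ := hα.trans_lt hαα₀
  have hanti : Antitone G := fun a b hab => by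
    simpa only [hG] using antitone_measureReal_lt (μ := μ) (X := ε) hab
  obtain ⟨γ, hαγ, hγα₀⟩ := exists_between hαα₀
  obtain ⟨β, hαβ, hβγ⟩ := exists_between hαγ
  have hβ : 0 < β := hα.trans_lt hαβ
  have hκ : 0 < 1 - γ / α₀ := by rw [sub_pos, div_lt_one hα₀]; exact hγα₀
  have hγβ : 1 < γ / β := by rw [one_lt_div hβ]; exact hβγ
  have hdiv : Tendsto (fun u => u / α₀) atTop atTop := tendsto_id.atTop_div_const hα₀
  have hsplit : ∀ u, μ.real {ω | u < Z ω + α * ε ω} ≤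
      μ.real {ω | (1 - γ / α₀) * u < Z ω} + G (γ / β * (u / α₀)) := by
    intro u
    rw [← hG]
    refine (measureReal_mono fun ω hω => ?_).trans (measureReal_union_le _ _)
    by_contra! h
    simp only [mem_union, mem_ofPred_eq, not_or, not_lt] at h
    have hαε : α * ε ω ≤ γ * (u / α₀) := by
      calc α * ε ω ≤ β * ε ω := mul_le_mul_of_nonneg_right hαβ.le (hεnn ω)
        _ ≤ β * (γ / β * (u / α₀)) := by gcongr; exact h.2
        _ = γ * (u / α₀) := by field_simp
    have : (1 - γ / α₀) * u + γ * (u / α₀) = u := by field_simp; ring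
    exact (show u < Z ω + α * ε ω from hω).not_ge (by linarith [h.1])
  have hZpart : (fun u => μ.real {ω | (1 - γ / α₀) * u < Z ω}) =o[atTop] (fun u => G (u / α₀)) := by
    refine (hZ.comp_tendsto (tendsto_id.const_mul_atTop hκ)).trans_isLittleO ?_
    refine ((hlong.isLittleO_exp hpos hanti (mul_pos hκ hα₀)).comp_tendsto hdiv).congr_left ?_
    intro u
    simp only [Function.comp, id]
    congr 1
    field_simp
  have hεpart := ((isLittleO_iff_tendsto fun t ht => absurd ht (hpos t).ne').2
    (hratio _ hγβ)).comp_tendsto hdiv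
  refine IsBigO.trans_isLittleO (isBigO_of_le _ fun u => ?_) (hZpart.add hεpart)
  rw [norm_of_nonneg measureReal_nonneg]
  exact (hsplit u).trans (Real.le_norm_self _)

end LightTails

section MarginalTail

variable {Ω : Type*} {mΩ : MeasurableSpace Ω} {μ : Measure Ω} [IsProbabilityMeasure μ]

/-- Above a level `h` the light variable `Y` is dominated by `ε'` times an independent copy
`a E₂` of `a E`, so on `{Y > h}` the event `{a E + Y > t}` costs at most `ε'` times the tail of
`a (E₁ + E₂)`, which is `O(G (t/a))`. -/
theorem eventually_measureReal_lt_mul_add_le {E Y E₁ E₂ : Ω → ℝ} (hE : Measurable E)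
    (hY : Measurable Y) (hE₁ : Measurable E₁) (hE₂ : Measurable E₂) (hEY : IndepFun E Y μ)
    (h₁₂ : IndepFun E₁ E₂ μ) (hlaw₁ : μ.map E₁ = μ.map E) (hlaw₂ : μ.map E₂ = μ.map E)
    {G : ℝ → ℝ} (hG : ∀ t, μ.real {ω | t < E ω} = G t) (hlong : IsLongTailed G)
    (hpos : ∀ t, 0 < G t) {a : ℝ} (ha : 0 < a)
    (hYo : (fun u => μ.real {ω | u < Y ω}) =o[atTop] (fun u => G (u / a)))
    (hsum : (fun s => μ.real {ω | s < E₁ ω + E₂ ω}) =O[atTop] G) {η : ℝ} (hη : 0 < η) :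
    ∀ᶠ t in atTop, μ.real {ω | t < a * E ω + Y ω} ≤ (1 + η) * G (t / a) := by
  obtain ⟨C, hC, hCbound⟩ := hsum.exists_pos
  set ε' := η / (2 * C)
  have hε' : 0 < ε' := by positivity
  obtain ⟨h, hh⟩ := eventually_atTop.1 ((hYo.def hε').and (eventually_ge_atTop 0))
  have hh₀ : 0 ≤ h := (hh h le_rfl).2
  have hdom : ∀ u, h ≤ u → μ.real {ω | u < Y ω} ≤ ε' * μ.real {ω | u < a * E₂ ω} := by
    intro u hu
    have := (hh u hu).1
    rw [norm_of_nonneg measureReal_nonneg, norm_of_nonneg (hpos _).le] at this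
    convert this using 2
    rw [← hG, ← measureReal_lt_eq_of_map_eq hE₂ hE hlaw₂]
    congr 1; ext ω
    exact (div_lt_iff₀' ha).symm
  have hdiv : Tendsto (fun t => t / a) atTop atTop := tendsto_id.atTop_div_const ha
  filter_upwards [hdiv.eventually (hlong.eventually_le_mul hpos (by positivity : 0 ≤ h / a)
    (show 1 < 1 + η / 2 by linarith)), hdiv.eventually hCbound.bound] with t hshift hconv
  rw [norm_of_nonneg measureReal_nonneg, norm_of_nonneg (hpos _).le] at hconv
  have hsplit : {ω | t < a * E ω + Y ω} ⊆
      {ω | t / a - h / a < E ω} ∪ {ω | max h (t - a * E ω) < Y ω} := by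
    intro ω (hω : t < a * E ω + Y ω)
    by_cases hYh : Y ω ≤ h
    · left
      change t / a - h / a < E ω
      rw [← sub_div, div_lt_iff₀ ha]
      linarith
    · exact Or.inr (max_lt (not_le.1 hYh) (by linarith))
  have hcopy : μ.real {ω | max h (t - a * E ω) < Y ω} ≤
      ε' * μ.real {ω | max h (t - a * E₁ ω) < a * E₂ ω} :=
    measureReal_comp_lt_le_of_indepFun hE hY hE₁ (hE₂.const_mul a) hEY
      (h₁₂.comp measurable_id (measurable_const_mul a)) hlaw₁.symm
      (f := fun v => max h (t - a * v)) (by fun_prop) hε'.le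
      fun v => hdom _ (le_max_left _ _)
  have hsum_le : μ.real {ω | max h (t - a * E₁ ω) < a * E₂ ω} ≤
      μ.real {ω | t / a < E₁ ω + E₂ ω} := by
    refine measureReal_mono fun ω (hω : max h (t - a * E₁ ω) < a * E₂ ω) => ?_
    change t / a < E₁ ω + E₂ ω
    rw [div_lt_iff₀' ha]
    linarith [le_max_right h (t - a * E₁ ω)]
  calc μ.real {ω | t < a * E ω + Y ω}
      ≤ μ.real {ω | t / a - h / a < E ω} + μ.real {ω | max h (t - a * E ω) < Y ω} :=
        (measureReal_mono hsplit).trans (measureReal_union_le _ _)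
    _ ≤ (1 + η / 2) * G (t / a) + ε' * (C * G (t / a)) := by
        rw [hG]
        gcongr
        exact hcopy.trans (mul_le_mul_of_nonneg_left (hsum_le.trans hconv) hε'.le)
    _ = (1 + η) * G (t / a) := by simp only [ε']; field_simp; ring

end MarginalTail

section TailDependence

variable {Ω : Type*} {mΩ : MeasurableSpace Ω} {μ : Measure Ω} [IsProbabilityMeasure μ]
  {E Y₁ Y₂ W₁ W₂ : Ω → ℝ} {a₁ a₂ : ℝ}

lemma mul_le_measureReal_lt_and_lt (hind : IndepFun E (fun ω => (Y₁ ω, Y₂ ω)) μ)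
    (hW₁ : ∀ ω, W₁ ω = a₁ * E ω + Y₁ ω) (hW₂ : ∀ ω, W₂ ω = a₂ * E ω + Y₂ ω)
    (ha₁ : 0 < a₁) (ha₂ : 0 < a₂) {c m s₁ s₂ : ℝ} (hs₁ : s₁ + m ≤ a₁ * c)
    (hs₂ : s₂ + m ≤ a₂ * c) :
    μ.real {ω | c < E ω} * μ.real {ω | -m < Y₁ ω ∧ -m < Y₂ ω} ≤
      μ.real {ω | s₁ < W₁ ω ∧ s₂ < W₂ ω} := by
  calc μ.real {ω | c < E ω} * μ.real {ω | -m < Y₁ ω ∧ -m < Y₂ ω}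
      = μ.real (E ⁻¹' Ioi c ∩ (fun ω => (Y₁ ω, Y₂ ω)) ⁻¹' (Ioi (-m) ×ˢ Ioi (-m))) :=
        (hind.measureReal_inter_preimage_eq_mul measurableSet_Ioi
          (measurableSet_Ioi.prod measurableSet_Ioi)).symm
    _ ≤ _ := measureReal_mono fun ω ⟨(hE : c < E ω), ⟨(h₁ : -m < Y₁ ω), (h₂ : -m < Y₂ ω)⟩⟩ => ?_
  change s₁ < W₁ ω ∧ s₂ < W₂ ω
  rw [hW₁, hW₂]
  constructor <;> nlinarith

lemma tendsto_measureReal_neg_lt_and_neg_lt :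
    Tendsto (fun m => μ.real {ω | -m < Y₁ ω ∧ -m < Y₂ ω}) atTop (𝓝 1) := by
  have hmono : Monotone fun m : ℝ => {ω | -m < Y₁ ω ∧ -m < Y₂ ω} :=
    fun m m' hm ω ⟨h₁, h₂⟩ => ⟨by linarith, by linarith⟩
  have hunion : ⋃ m : ℝ, {ω | -m < Y₁ ω ∧ -m < Y₂ ω} = univ :=
    eq_univ_of_forall fun ω => mem_iUnion.2 ⟨|Y₁ ω| + |Y₂ ω| + 1, by
      constructor <;> linarith [neg_abs_le (Y₁ ω), neg_abs_le (Y₂ ω), abs_nonneg (Y₁ ω),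
        abs_nonneg (Y₂ ω)]⟩
  have := tendsto_measure_iUnion_atTop (μ := μ) hmono
  rw [hunion, measure_univ] at this
  exact (ENNReal.tendsto_toReal ENNReal.one_ne_top).comp this

lemma pos_measureReal_lt_and_lt (hind : IndepFun E (fun ω => (Y₁ ω, Y₂ ω)) μ)
    (hW₁ : ∀ ω, W₁ ω = a₁ * E ω + Y₁ ω) (hW₂ : ∀ ω, W₂ ω = a₂ * E ω + Y₂ ω)
    (ha₁ : 0 < a₁) (ha₂ : 0 < a₂) (hpos : ∀ c, 0 < μ.real {ω | c < E ω}) (z : ℝ) :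
    0 < μ.real {ω | z < W₁ ω ∧ z < W₂ ω} := by
  obtain ⟨m, hm⟩ := ((tendsto_measureReal_neg_lt_and_neg_lt (μ := μ) (Y₁ := Y₁)
    (Y₂ := Y₂)).eventually_const_lt zero_lt_one).exists
  set c := max ((z + m) / a₁) ((z + m) / a₂)
  refine (mul_pos (hpos c) hm).trans_le (mul_le_measureReal_lt_and_lt hind hW₁ hW₂ ha₁ ha₂ ?_ ?_)
  · rw [← div_le_iff₀' ha₁]; exact le_max_left _ _
  · rw [← div_le_iff₀' ha₂]; exact le_max_right _ _

/-- With `tᵢ` the two quantiles and `c₀ = max ((t₁ - 1)/a₁) ((t₂ - 1)/a₂)`, the marginal bounds give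
`q ≤ (1 + η) G c₀`; and `E > c₀ + m'` forces both exceedances as soon as `Y₁, Y₂ > -m`, an event
of probability at least `(1 + η)⁻¹`. -/
lemma eventually_le_mul_measureReal_quantile_lt_and_lt (hW₁m : Measurable W₁)
    (hW₂m : Measurable W₂) (hind : IndepFun E (fun ω => (Y₁ ω, Y₂ ω)) μ)
    (hW₁ : ∀ ω, W₁ ω = a₁ * E ω + Y₁ ω) (hW₂ : ∀ ω, W₂ ω = a₂ * E ω + Y₂ ω)
    (ha₁ : 0 < a₁) (ha₂ : 0 < a₂) {G : ℝ → ℝ} (hG : ∀ t, μ.real {ω | t < E ω} = G t)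
    (hpos : ∀ t, 0 < G t) (hlong : IsLongTailed G)
    (hup₁ : ∀ η > 0, ∀ᶠ t in atTop, μ.real {ω | t < W₁ ω} ≤ (1 + η) * G (t / a₁))
    (hup₂ : ∀ η > 0, ∀ᶠ t in atTop, μ.real {ω | t < W₂ ω} ≤ (1 + η) * G (t / a₂))
    (htend₁ : Tendsto (fun q => quantile (μ.map W₁) (1 - q)) (𝓝[>] 0) atTop)
    (htend₂ : Tendsto (fun q => quantile (μ.map W₂) (1 - q)) (𝓝[>] 0) atTop)
    {η : ℝ} (hη : 0 < η) :
    ∀ᶠ q in 𝓝[>] 0, q ≤ (1 + η) ^ 3 *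
      μ.real {ω | quantile (μ.map W₁) (1 - q) < W₁ ω ∧ quantile (μ.map W₂) (1 - q) < W₂ ω} := by
  obtain ⟨m, hm, hm₀⟩ := (((tendsto_measureReal_neg_lt_and_neg_lt (μ := μ) (Y₁ := Y₁)
    (Y₂ := Y₂)).eventually_const_le (inv_lt_one_of_one_lt₀ (by linarith : 1 < 1 + η))).and
    (eventually_ge_atTop 0)).exists
  set m' := (m + 1) / a₁ + (m + 1) / a₂
  have hm'₁ : m + 1 ≤ a₁ * m' := (div_le_iff₀' ha₁).1 (le_add_of_nonneg_right (by positivity))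
  have hm'₂ : m + 1 ≤ a₂ * m' := (div_le_iff₀' ha₂).1 (le_add_of_nonneg_left (by positivity))
  obtain ⟨T₀, hT₀⟩ := eventually_atTop.1 ((tendsto_atTop_add_const_right _ m' tendsto_id).eventually
    (hlong.eventually_le_mul hpos (by positivity : 0 ≤ m') (by linarith : 1 < 1 + η)))
  obtain ⟨T₁, hT₁⟩ := eventually_atTop.1 (hup₁ η hη)
  obtain ⟨T₂, hT₂⟩ := eventually_atTop.1 (hup₂ η hη)
  filter_upwards [htend₁.eventually (eventually_ge_atTop (max (T₁ + 1) (a₁ * T₀ + 1))),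
    htend₂.eventually (eventually_ge_atTop (T₂ + 1)), Ioo_mem_nhdsGT one_pos]
    with q hq₁ hq₂ ⟨hq₀, hq⟩
  set t₁ := quantile (μ.map W₁) (1 - q)
  set t₂ := quantile (μ.map W₂) (1 - q)
  set c₀ := max ((t₁ - 1) / a₁) ((t₂ - 1) / a₂)
  have hmarg₁ : q ≤ (1 + η) * G ((t₁ - 1) / a₁) :=
    (lt_measureReal_lt_of_lt_quantile hW₁m hq (sub_one_lt t₁)).le.trans
      (hT₁ _ (by linarith [le_max_left (T₁ + 1) (a₁ * T₀ + 1)]))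
  have hmarg₂ : q ≤ (1 + η) * G ((t₂ - 1) / a₂) :=
    (lt_measureReal_lt_of_lt_quantile hW₂m hq (sub_one_lt t₂)).le.trans (hT₂ _ (by linarith))
  have hmarg : q ≤ (1 + η) * G c₀ := by
    rcases max_choice ((t₁ - 1) / a₁) ((t₂ - 1) / a₂) with h | h <;>
      simpa only [c₀, h]
  have hc₀ : T₀ ≤ c₀ := by
    refine le_trans ?_ (le_max_left _ _)
    rw [le_div_iff₀ ha₁]; linarith [le_max_right (T₁ + 1) (a₁ * T₀ + 1)]
  have hshift : G c₀ ≤ (1 + η) * G (c₀ + m') := by simpa using hT₀ c₀ hc₀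
  have hjoint := mul_le_measureReal_lt_and_lt (c := c₀ + m') (m := m) (s₁ := t₁) (s₂ := t₂)
    hind hW₁ hW₂ ha₁ ha₂ ?_ ?_
  · rw [hG] at hjoint
    calc q ≤ (1 + η) * G c₀ := hmarg
      _ ≤ (1 + η) * ((1 + η) * G (c₀ + m')) := by gcongr
      _ = (1 + η) ^ 3 * (G (c₀ + m') * (1 + η)⁻¹) := by field_simp
      _ ≤ (1 + η) ^ 3 * (G (c₀ + m') * μ.real {ω | -m < Y₁ ω ∧ -m < Y₂ ω}) := by
        gcongr; exact (hpos _).le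
      _ ≤ _ := by gcongr
  · have : t₁ - 1 ≤ a₁ * c₀ := by rw [← div_le_iff₀' ha₁]; exact le_max_left _ _
    linarith
  · have : t₂ - 1 ≤ a₂ * c₀ := by rw [← div_le_iff₀' ha₂]; exact le_max_right _ _
    linarith

theorem tendsto_measureReal_quantile_lt_and_lt_div (hW₁m : Measurable W₁)
    (hW₂m : Measurable W₂) (hind : IndepFun E (fun ω => (Y₁ ω, Y₂ ω)) μ)
    (hW₁ : ∀ ω, W₁ ω = a₁ * E ω + Y₁ ω) (hW₂ : ∀ ω, W₂ ω = a₂ * E ω + Y₂ ω)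
    (ha₁ : 0 < a₁) (ha₂ : 0 < a₂) {G : ℝ → ℝ} (hG : ∀ t, μ.real {ω | t < E ω} = G t)
    (hpos : ∀ t, 0 < G t) (hlong : IsLongTailed G)
    (hup₁ : ∀ η > 0, ∀ᶠ t in atTop, μ.real {ω | t < W₁ ω} ≤ (1 + η) * G (t / a₁))
    (hup₂ : ∀ η > 0, ∀ᶠ t in atTop, μ.real {ω | t < W₂ ω} ≤ (1 + η) * G (t / a₂)) :
    Tendsto (fun q => μ.real {ω | quantile (μ.map W₁) (1 - q) < W₁ ω ∧
      quantile (μ.map W₂) (1 - q) < W₂ ω} / q) (𝓝[>] 0) (𝓝 1) := by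
  have hjoint := pos_measureReal_lt_and_lt hind hW₁ hW₂ ha₁ ha₂ (fun c => hG c ▸ hpos c)
  have htend₁ := tendsto_quantile_one_sub (μ := μ.map W₁) fun z => by
    rw [← sub_pos, ← measureReal_lt_eq_one_sub_cdf hW₁m]
    exact (hjoint z).trans_le (measureReal_mono fun ω h => h.1)
  have htend₂ := tendsto_quantile_one_sub (μ := μ.map W₂) fun z => by
    rw [← sub_pos, ← measureReal_lt_eq_one_sub_cdf hW₂m]
    exact (hjoint z).trans_le (measureReal_mono fun ω h => h.2)
  refine tendsto_order.2 ⟨fun b hb => ?_, fun b hb => ?_⟩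
  · have hlim : Tendsto (fun η : ℝ => ((1 + η) ^ 3)⁻¹) (𝓝[>] 0) (𝓝 1) := by
      refine tendsto_nhdsWithin_of_tendsto_nhds ?_
      simpa using ((tendsto_const_nhds.add tendsto_id).pow 3).inv₀
        (by norm_num : ((1 : ℝ) + 0) ^ 3 ≠ 0)
    obtain ⟨η, hbη, hη⟩ := ((hlim.eventually (lt_mem_nhds hb)).and self_mem_nhdsWithin).exists
    filter_upwards [eventually_le_mul_measureReal_quantile_lt_and_lt hW₁m hW₂m hind hW₁ hW₂ ha₁ ha₂
      hG hpos hlong hup₁ hup₂ htend₁ htend₂ hη, self_mem_nhdsWithin] with q hq (hq₀ : 0 < q)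
    rw [lt_div_iff₀ hq₀]
    refine (mul_lt_mul_of_pos_right hbη hq₀).trans_le ?_
    rw [inv_mul_le_iff₀ (by positivity)]
    exact hq
  · filter_upwards [self_mem_nhdsWithin] with q (hq₀ : 0 < q)
    rw [div_lt_iff₀ hq₀]
    refine lt_of_le_of_lt ?_ (lt_mul_of_one_lt_left hq₀ hb)
    exact (measureReal_mono fun ω h => h.1).trans (measureReal_quantile_lt_le hW₁m hq₀)

end TailDependence

section FactorModel

variable {Ω : Type*} {mΩ : MeasurableSpace Ω} {μ : Measure Ω}

lemma map_mul_add_mul_eq_gaussianReal {X₁ X₂ : Ω → ℝ} (hind : IndepFun X₁ X₂ μ) (h₁ : μ.map X₁ = gaussianReal 0 1)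
    (h₂ : μ.map X₂ = gaussianReal 0 1) {a b : ℝ} (hab : a ^ 2 + b ^ 2 = 1) :
    μ.map (fun ω => a * X₁ ω + b * X₂ ω) = gaussianReal 0 1 := by
  have hX₁ : AEMeasurable X₁ μ := aemeasurable_of_map_neZero (by rw [h₁]; infer_instance)
  have hX₂ : AEMeasurable X₂ μ := aemeasurable_of_map_neZero (by rw [h₂]; infer_instance)
  have := gaussianReal_add_gaussianReal_of_indepFun
    (hind.comp (measurable_const_mul a) (measurable_const_mul b))
    (gaussianReal_const_mul ⟨hX₁, h₁⟩ a).map_eq (gaussianReal_const_mul ⟨hX₂, h₂⟩ b).map_eq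
  convert this using 2
  · rfl
  · simp
  · exact NNReal.eq (by simp [hab])

lemma indepFun_common_factor {X₁ X₂ ε₀ ε₁ ε₂ : Ω → ℝ}
    (hindep : iIndepFun ![X₁, X₂, ε₀, ε₁, ε₂] μ) (hX₁ : Measurable X₁) (hX₂ : Measurable X₂)
    (hε₀ : Measurable ε₀) (hε₁ : Measurable ε₁) (hε₂ : Measurable ε₂) (α₁ α₂ ρ b : ℝ) :
    IndepFun ε₀ (fun ω => (X₁ ω + α₁ * ε₁ ω, ρ * X₁ ω + b * X₂ ω + α₂ * ε₂ ω)) μ := by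
  have hmeas : ∀ i, Measurable (![X₁, X₂, ε₀, ε₁, ε₂] i) := by
    intro i; fin_cases i <;> assumption
  have hφ : Measurable fun v : ({2} : Finset (Fin 5)) → ℝ => v ⟨2, by decide⟩ :=
    measurable_pi_apply _
  have hψ : Measurable fun v : ({0, 1, 3, 4} : Finset (Fin 5)) → ℝ =>
      (v ⟨0, by decide⟩ + α₁ * v ⟨3, by decide⟩,
        ρ * v ⟨0, by decide⟩ + b * v ⟨1, by decide⟩ + α₂ * v ⟨4, by decide⟩) := by
    fun_prop
  exact (hindep.indepFun_finset _ _ (by decide) hmeas).comp hφ hψ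

lemma eventually_measureReal_lt_add_mul_add_mul_le [IsProbabilityMeasure μ]
    {Z E ε E₁ E₂ : Ω → ℝ} (hZ : Measurable Z) (hE : Measurable E) (hε : Measurable ε)
    (hE₁ : Measurable E₁) (hE₂ : Measurable E₂) {α α₀ : ℝ} (hα : 0 ≤ α) (hαα₀ : α < α₀)
    (hind : IndepFun E (fun ω => Z ω + α * ε ω) μ) (h₁₂ : IndepFun E₁ E₂ μ)
    (hlaw₁ : μ.map E₁ = μ.map E) (hlaw₂ : μ.map E₂ = μ.map E)
    (hZlaw : μ.map Z = gaussianReal 0 1) (hεnn : ∀ ω, 0 ≤ ε ω) {G : ℝ → ℝ}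
    (hG : ∀ t, μ.real {ω | t < E ω} = G t) (hGε : ∀ t, μ.real {ω | t < ε ω} = G t)
    (hpos : ∀ t, 0 < G t) (hlong : IsLongTailed G)
    (hratio : ∀ a, 1 < a → Tendsto (fun c => G (a * c) / G c) atTop (𝓝 0))
    (hsub : Tendsto (fun t => μ.real {ω | t < E₁ ω + E₂ ω} / G t) atTop (𝓝 2))
    {η : ℝ} (hη : 0 < η) :
    ∀ᶠ t in atTop, μ.real {ω | t < Z ω + α₀ * E ω + α * ε ω} ≤ (1 + η) * G (t / α₀) := by
  have hsum : (fun s => μ.real {ω | s < E₁ ω + E₂ ω}) =O[atTop] G :=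
    isBigO_of_div_tendsto_nhds (Eventually.of_forall fun t h => absurd h (hpos t).ne') 2 hsub
  have hY := isLittleO_measureReal_lt_add_mul hεnn hGε hlong hpos hratio
    (isBigO_measureReal_lt_exp_neg hZlaw) hα hαα₀
  filter_upwards [eventually_measureReal_lt_mul_add_le hE (by fun_prop) hE₁ hE₂ hind h₁₂ hlaw₁
    hlaw₂ hG hlong hpos (hα.trans_lt hαα₀) hY hsum hη] with t ht
  convert ht using 5 with ω
  ring

end FactorModel

theorem full_upper_tail_dependence_subexponential_factors_general
    {Ω : Type*} [MeasureSpace Ω] [IsProbabilityMeasure (ℙ : Measure Ω)]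
    (X₁ X₂ ε₀ ε₁ ε₂ : Ω → ℝ)
    (hX₁ : Measurable X₁) (hX₂ : Measurable X₂)
    (hε₀ : Measurable ε₀) (hε₁ : Measurable ε₁) (hε₂ : Measurable ε₂)
    (hlawX₁ : Measure.map X₁ ℙ = gaussianReal 0 1)
    (hlawX₂ : Measure.map X₂ ℙ = gaussianReal 0 1)
    (hnn₁ : ∀ ω, 0 ≤ ε₁ ω) (hnn₂ : ∀ ω, 0 ≤ ε₂ ω)
    (hiid₁ : Measure.map ε₁ ℙ = Measure.map ε₀ ℙ)
    (hiid₂ : Measure.map ε₂ ℙ = Measure.map ε₀ ℙ)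
    (hindep : iIndepFun ![X₁, X₂, ε₀, ε₁, ε₂] ℙ)
    (Fε Fbar : ℝ → ℝ)
    (hFε : ∀ t, Fε t = (ℙ {ω | ε₀ ω ≤ t}).toReal)
    (hFbar : ∀ t, Fbar t = 1 - Fε t)
    (hFbarpos : ∀ t, 0 < Fbar t)
    (hsubexp : Tendsto (fun t : ℝ => (ℙ {ω | t < ε₁ ω + ε₂ ω}).toReal / Fbar t)
      atTop (nhds 2))
    (hratio : ∀ a : ℝ, 1 < a →
      Tendsto (fun c : ℝ => Fbar (a * c) / Fbar c) atTop (nhds 0))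
    (ρ : ℝ) (hρ : ρ ∈ Set.Ioo (-1 : ℝ) 1)
    (Z₁ Z₂ : Ω → ℝ) (hZ₁ : Z₁ = X₁)
    (hZ₂ : Z₂ = fun ω => ρ * X₁ ω + Real.sqrt (1 - ρ ^ 2) * X₂ ω)
    (α₁₀ α₂₀ α₁ α₂ : ℝ) (hα₁₀ : 0 < α₁₀) (hα₂₀ : 0 < α₂₀) (hα₁ : 0 ≤ α₁) (hα₂ : 0 ≤ α₂)
    (W₁ W₂ : Ω → ℝ)
    (hW₁ : W₁ = fun ω => Z₁ ω + α₁₀ * ε₀ ω + α₁ * ε₁ ω)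
    (hW₂ : W₂ = fun ω => Z₂ ω + α₂₀ * ε₀ ω + α₂ * ε₂ ω)
    (hgt₁ : α₁ < α₁₀) (hgt₂ : α₂ < α₂₀)
    (Q₁ Q₂ : ℝ → ℝ)
    (hQ₁ : ∀ p, Q₁ p = sInf {z : ℝ | p ≤ (ℙ {ω | W₁ ω ≤ z}).toReal})
    (hQ₂ : ∀ p, Q₂ p = sInf {z : ℝ | p ≤ (ℙ {ω | W₂ ω ≤ z}).toReal}) :
    Tendsto (fun q : ℝ =>
        (ℙ {ω | Q₁ (1 - q) < W₁ ω ∧ Q₂ (1 - q) < W₂ ω}).toReal / q)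
      (nhdsWithin 0 (Set.Ioi 0)) (nhds 1) := by
  obtain ⟨hρ₁, hρ₂⟩ := hρ
  subst Z₁ Z₂
  have hW₁m : Measurable W₁ := by rw [hW₁]; fun_prop
  have hW₂m : Measurable W₂ := by rw [hW₂]; fun_prop
  have hQ₁' : Q₁ = quantile (Measure.map W₁ ℙ) := funext fun p =>
    (hQ₁ p).trans (quantile_map_eq hW₁m p).symm
  have hQ₂' : Q₂ = quantile (Measure.map W₂ ℙ) := funext fun p =>
    (hQ₂ p).trans (quantile_map_eq hW₂m p).symm
  subst hQ₁' hQ₂' hW₁ hW₂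
  have hFs : ∀ t, volume.real {ω | t < ε₀ ω} = Fbar t := fun t => by
    rw [hFbar, hFε, measureReal_lt_eq_one_sub_measureReal_le hε₀]
    rfl
  have hF₁ : ∀ t, volume.real {ω | t < ε₁ ω} = Fbar t := fun t => by
    rw [measureReal_lt_eq_of_map_eq hε₁ hε₀ hiid₁, hFs]
  have hF₂ : ∀ t, volume.real {ω | t < ε₂ ω} = Fbar t := fun t => by
    rw [measureReal_lt_eq_of_map_eq hε₂ hε₀ hiid₂, hFs]
  have hind₁₂ : IndepFun ε₁ ε₂ ℙ := by simpa using hindep.indepFun (show (3 : Fin 5) ≠ 4 by decide)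
  have hindX : IndepFun X₁ X₂ ℙ := by simpa using hindep.indepFun (show (0 : Fin 5) ≠ 1 by decide)
  have hindE := indepFun_common_factor hindep hX₁ hX₂ hε₀ hε₁ hε₂ α₁ α₂ ρ √(1 - ρ ^ 2)
  have hlong : IsLongTailed Fbar :=
    .of_tendsto_measureReal_lt_add_div hε₁ hε₂ hind₁₂ hnn₁ hnn₂ hF₁ hF₂ hFbarpos hsubexp
  have hlawZ₂ := map_mul_add_mul_eq_gaussianReal hindX hlawX₁ hlawX₂
    (a := ρ) (b := √(1 - ρ ^ 2)) (by rw [sq_sqrt (by nlinarith)]; ring)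
  refine tendsto_measureReal_quantile_lt_and_lt_div hW₁m hW₂m hindE (fun _ => by ring)
    (fun _ => by ring) hα₁₀ hα₂₀ hFs hFbarpos hlong (fun η hη => ?_) (fun η hη => ?_)
  · exact eventually_measureReal_lt_add_mul_add_mul_le hX₁ hε₀ hε₁ hε₁ hε₂ hα₁ hgt₁
      (hindE.comp measurable_id measurable_fst) hind₁₂ hiid₁ hiid₂ hlawX₁ hnn₁ hFs hF₁ hFbarpos
      hlong hratio hsubexp hη
  · exact eventually_measureReal_lt_add_mul_add_mul_le (by fun_prop) hε₀ hε₂ hε₁ hε₂ hα₂ hgt₂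
      (hindE.comp measurable_id measurable_snd) hind₁₂ hiid₁ hiid₂ hlawZ₂ hnn₂ hFs hF₂ hFbarpos
      hlong hratio hsubexp hη

theorem full_upper_tail_dependence_subexponential_factors
    {Ω : Type*} [MeasureSpace Ω] [IsProbabilityMeasure (ℙ : Measure Ω)]
    (X₁ X₂ ε₀ ε₁ ε₂ : Ω → ℝ)
    (hX₁ : Measurable X₁) (hX₂ : Measurable X₂)
    (hε₀ : Measurable ε₀) (hε₁ : Measurable ε₁) (hε₂ : Measurable ε₂)
    (hlawX₁ : Measure.map X₁ ℙ = gaussianReal 0 1)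
    (hlawX₂ : Measure.map X₂ ℙ = gaussianReal 0 1)
    (hnn₀ : ∀ ω, 0 ≤ ε₀ ω) (hnn₁ : ∀ ω, 0 ≤ ε₁ ω) (hnn₂ : ∀ ω, 0 ≤ ε₂ ω)
    (hiid₁ : Measure.map ε₁ ℙ = Measure.map ε₀ ℙ)
    (hiid₂ : Measure.map ε₂ ℙ = Measure.map ε₀ ℙ)
    (hindep : iIndepFun ![X₁, X₂, ε₀, ε₁, ε₂] ℙ)
    (Fε Fbar : ℝ → ℝ)
    (hFε : ∀ t, Fε t = (ℙ {ω | ε₀ ω ≤ t}).toReal)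
    (hFbar : ∀ t, Fbar t = 1 - Fε t)
    (hFbarpos : ∀ t, 0 < Fbar t)
    (hsubexp : Tendsto (fun t : ℝ => (ℙ {ω | t < ε₁ ω + ε₂ ω}).toReal / Fbar t)
      atTop (nhds 2))
    (hratio : ∀ a : ℝ, 1 < a →
      Tendsto (fun c : ℝ => Fbar (a * c) / Fbar c) atTop (nhds 0))
    (ρ : ℝ) (hρ : ρ ∈ Set.Ioo (-1 : ℝ) 1)
    (Z₁ Z₂ : Ω → ℝ) (hZ₁ : Z₁ = X₁)
    (hZ₂ : Z₂ = fun ω => ρ * X₁ ω + Real.sqrt (1 - ρ ^ 2) * X₂ ω)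
    (α₁₀ α₂₀ α₁ α₂ : ℝ) (hα₁₀ : 0 < α₁₀) (hα₂₀ : 0 < α₂₀) (hα₁ : 0 ≤ α₁) (hα₂ : 0 ≤ α₂)
    (W₁ W₂ : Ω → ℝ)
    (hW₁ : W₁ = fun ω => Z₁ ω + α₁₀ * ε₀ ω + α₁ * ε₁ ω)
    (hW₂ : W₂ = fun ω => Z₂ ω + α₂₀ * ε₀ ω + α₂ * ε₂ ω)
    (hgt₁ : α₁ < α₁₀) (hgt₂ : α₂ < α₂₀)
    (Q₁ Q₂ : ℝ → ℝ)
    (hQ₁ : ∀ p, Q₁ p = sInf {z : ℝ | p ≤ (ℙ {ω | W₁ ω ≤ z}).toReal})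
    (hQ₂ : ∀ p, Q₂ p = sInf {z : ℝ | p ≤ (ℙ {ω | W₂ ω ≤ z}).toReal}) :
    Tendsto (fun q : ℝ =>
        (ℙ {ω | Q₁ (1 - q) < W₁ ω ∧ Q₂ (1 - q) < W₂ ω}).toReal / q)
      (nhdsWithin 0 (Set.Ioi 0)) (nhds 1) :=
  full_upper_tail_dependence_subexponential_factors_general X₁ X₂ ε₀ ε₁ ε₂ hX₁ hX₂ hε₀ hε₁ hε₂
    hlawX₁ hlawX₂ hnn₁ hnn₂ hiid₁ hiid₂ hindep Fε Fbar hFε hFbar hFbarpos hsubexp hratio ρ hρ Z₁ Z₂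
    hZ₁ hZ₂ α₁₀ α₂₀ α₁ α₂ hα₁₀ hα₂₀ hα₁ hα₂ W₁ W₂ hW₁ hW₂ hgt₁ hgt₂ Q₁ Q₂ hQ₁ hQ₂
end
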